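/- arXiv:2307.06584 — 6 statements merged into one kernel-verified Lean document; each statement's English description precedes it below -/
import Mathlib

section
/- Let p be an odd prime and let G be a finite non-abelian p-group which is generated by its elements of order p. Then there exists an element t of order p with t ∈ Z₂(G) and t ∉ Z(G), where Z(G) is the center of G and Z₂(G) is the second term of the upper central series of G. -/
section Helpers

variable {G : Type*} [Group G] {p : ℕ}

private lemma hb_inv {b : G} (hb : ∀ g : G, g * b = b * g) : ∀ g : G, g * b⁻¹ = b⁻¹ * g := by
  intro g
  have h : b * (g * b⁻¹) = b * (b⁻¹ * g) := by
    rw [← mul_assoc, ← hb g]; group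
  exact mul_left_cancel h

private lemma comm_mul_helper (t y z b : G) (hbdef : t * z * t⁻¹ * z⁻¹ = b)
    (hb : ∀ g : G, g * b = b * g) :
    t * (y * z) * t⁻¹ * (y * z)⁻¹ = (t * y * t⁻¹ * y⁻¹) * b := by
  have e1 : t * z * t⁻¹ = b * z := by rw [← hbdef]; group
  calc t * (y * z) * t⁻¹ * (y * z)⁻¹
      = (t * y * t⁻¹) * (t * z * t⁻¹) * z⁻¹ * y⁻¹ := by group
    _ = (t * y * t⁻¹) * (b * z) * z⁻¹ * y⁻¹ := by rw [e1]
    _ = (t * y * t⁻¹) * b * y⁻¹ := by group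
    _ = b * (t * y * t⁻¹) * y⁻¹ := by rw [hb]
    _ = b * (t * y * t⁻¹ * y⁻¹) := by group
    _ = (t * y * t⁻¹ * y⁻¹) * b := (hb _).symm

private lemma comm_inv_helper (t y b : G) (hbdef : t * y * t⁻¹ * y⁻¹ = b)
    (hb : ∀ g : G, g * b = b * g) :
    t * y⁻¹ * t⁻¹ * (y⁻¹)⁻¹ = b⁻¹ := by
  have e1 : t * y * t⁻¹ = b * y := by rw [← hbdef]; group
  have e2 : t * y⁻¹ * t⁻¹ = y⁻¹ * b⁻¹ := by
    rw [show t * y⁻¹ * t⁻¹ = (t * y * t⁻¹)⁻¹ by group, e1]; group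
  calc t * y⁻¹ * t⁻¹ * (y⁻¹)⁻¹ = (t * y⁻¹ * t⁻¹) * y := by group
    _ = y⁻¹ * b⁻¹ * y := by rw [e2]
    _ = b⁻¹ * y⁻¹ * y := by rw [hb_inv hb]
    _ = b⁻¹ := by group

/-- Commutators of an element of `Z₂` with anything are central. -/
lemma comm_central {x : G} (hx : x ∈ upperCentralSeries G 2) (y : G) :
    x * y * x⁻¹ * y⁻¹ ∈ Subgroup.center G := by
  have h := (mem_upperCentralSeries_succ_iff (n := 1)).mp hx y
  rwa [upperCentralSeries_one] at h

lemma comm_pow_mul {x : G} (hx : x ∈ upperCentralSeries G 2) (g : G) :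
    ∀ n : ℕ, x * (g ^ n) * x⁻¹ * (g ^ n)⁻¹ = (x * g * x⁻¹ * g⁻¹) ^ n := by
  intro n
  induction n with
  | zero => simp
  | succ n ih =>
      have hb := Subgroup.mem_center_iff.mp (comm_central hx g)
      rw [pow_succ, comm_mul_helper x (g ^ n) g _ rfl hb, ih, pow_succ]

/-- If `G` is generated by elements of order `p` and `x ∈ Z₂`, then all commutators
with `x` have order dividing `p`. -/
lemma comm_pow_one (hgen : Subgroup.closure {g : G | orderOf g = p} = ⊤) {x : G}
    (hx : x ∈ upperCentralSeries G 2) (y : G) : (x * y * x⁻¹ * y⁻¹) ^ p = 1 := by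
  have hy : y ∈ Subgroup.closure {g : G | orderOf g = p} := by rw [hgen]; trivial
  induction hy using Subgroup.closure_induction with
  | mem g hg =>
      have hgp : g ^ p = 1 := by rw [← hg]; exact pow_orderOf_eq_one g
      rw [← comm_pow_mul hx g p, hgp]
      group
  | one =>
      have h1 : x * 1 * x⁻¹ * 1⁻¹ = 1 := by group
      rw [h1, one_pow]
  | mul y z hy hz ihy ihz =>
      have hbz := Subgroup.mem_center_iff.mp (comm_central hx z)
      rw [comm_mul_helper x y z _ rfl hbz]
      have hcomm : Commute (x * y * x⁻¹ * y⁻¹) (x * z * x⁻¹ * z⁻¹) := hbz _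
      rw [hcomm.mul_pow, ihy, ihz, one_mul]
  | inv y hy ihy =>
      have hby := Subgroup.mem_center_iff.mp (comm_central hx y)
      rw [comm_inv_helper x y _ rfl hby, inv_pow, ihy, inv_one]

/-- class-2 style expansion: for `x ∈ Z₂`, `(x*y)^p = x^p * y^p` (`p` odd). -/
lemma expand_pow (hgen : Subgroup.closure {g : G | orderOf g = p} = ⊤) (hodd : Odd p)
    {x : G} (hx : x ∈ upperCentralSeries G 2) (y : G) : (x * y) ^ p = x ^ p * y ^ p := by
  obtain ⟨c, hcdef⟩ : ∃ c : G, (x * y * x⁻¹ * y⁻¹)⁻¹ = c := ⟨_, rfl⟩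
  have hccen : ∀ g : G, g * c = c * g := by
    rw [← hcdef]; exact hb_inv (Subgroup.mem_center_iff.mp (comm_central hx y))
  have hcp : c ^ p = 1 := by
    rw [← hcdef, inv_pow, comm_pow_one hgen hx y, inv_one]
  have hyx : ∀ n : ℕ, y ^ n * x = c ^ n * (x * y ^ n) := by
    intro n
    induction n with
    | zero => simp
    | succ n ih =>
        have h1 : y * x = c * (x * y) := by rw [← hcdef]; group
        calc y ^ (n + 1) * x = y ^ n * (y * x) := by rw [pow_succ]; group
          _ = y ^ n * (c * (x * y)) := by rw [h1]
          _ = (y ^ n * c) * (x * y) := by group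
          _ = (c * y ^ n) * (x * y) := by rw [hccen]
          _ = c * (y ^ n * x) * y := by group
          _ = c * (c ^ n * (x * y ^ n)) * y := by rw [ih]
          _ = c ^ (n + 1) * (x * y ^ (n + 1)) := by rw [pow_succ, pow_succ]; group
  have key : ∀ n : ℕ, ∃ m : ℕ, (x * y) ^ n = c ^ m * (x ^ n * y ^ n) ∧ 2 * m = n * (n - 1) := by
    intro n
    induction n with
    | zero => exact ⟨0, by simp, by simp⟩
    | succ n ih =>
        obtain ⟨m, hm, hm2⟩ := ih
        refine ⟨m + n, ?_, ?_⟩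
        · calc (x * y) ^ (n + 1) = (x * y) ^ n * (x * y) := by rw [pow_succ]
            _ = c ^ m * (x ^ n * y ^ n) * (x * y) := by rw [hm]
            _ = c ^ m * x ^ n * (y ^ n * x) * y := by group
            _ = c ^ m * x ^ n * (c ^ n * (x * y ^ n)) * y := by rw [hyx n]
            _ = c ^ m * (x ^ n * c ^ n) * (x * y ^ n) * y := by group
            _ = c ^ m * (c ^ n * x ^ n) * (x * y ^ n) * y := by
                have hxc : Commute x c := hccen x
                rw [(hxc.pow_pow n n).eq]
            _ = c ^ (m + n) * (x ^ (n + 1) * y ^ (n + 1)) := by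
                rw [pow_add, pow_succ, pow_succ]; group
        · have haux : n * (n - 1) + 2 * n = (n + 1) * n := by
            cases n with
            | zero => rfl
            | succ k => simp [Nat.succ_sub_one]; ring
          simp only [Nat.add_sub_cancel]
          omega
  obtain ⟨m, hm, hm2⟩ := key p
  obtain ⟨j, hj⟩ := hodd
  have hmj : m = p * j := by
    have h2 : 2 * (p * j) = p * (p - 1) := by
      rw [hj]; simp [Nat.add_sub_cancel]; ring
    omega
  rw [hm, hmj, pow_mul, hcp, one_pow, one_mul]

end Helpers
section MainAux

universe u

theorem aux_main (p : ℕ) (hp : p.Prime) (hodd : Odd p) :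
    ∀ (n : ℕ) (G : Type u) [Group G] [Finite G], Nat.card G ≤ n → IsPGroup p G →
      (∃ a b : G, a * b ≠ b * a) →
      Subgroup.closure {g : G | orderOf g = p} = ⊤ →
      ∃ t : G, orderOf t = p ∧ t ∈ upperCentralSeries G 2 ∧ t ∉ Subgroup.center G := by
  intro n
  induction n with
  | zero =>
      intro G _ _ hcard _ _ _
      have : 0 < Nat.card G := Nat.card_pos
      omega
  | succ n ih =>
      intro G _ _ hcard hpG hnonab hgen
      haveI : Fact p.Prime := ⟨hp⟩
      obtain ⟨a, b, hab⟩ := hnonab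
      haveI : Nontrivial G := ⟨a, 1, fun h => hab (by rw [h, one_mul, mul_one])⟩
      by_contra hcon
      push_neg at hcon
      -- every element of order p in Z₂ is central
      have hWZ : ∀ x : G, x ∈ upperCentralSeries G 2 → x ^ p = 1 → x ∈ Subgroup.center G := by
        intro x hx2 hxp
        by_cases hx1 : x = 1
        · rw [hx1]; exact Subgroup.one_mem _
        · refine hcon x ?_ hx2
          have hdvd : orderOf x ∣ p := orderOf_dvd_of_pow_eq_one hxp
          rcases (Nat.Prime.eq_one_or_self_of_dvd hp _ hdvd) with h | h
          · exact absurd (orderOf_eq_one_iff.mp h) hx1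
          · exact h
      have hcen2 : Subgroup.center G ≤ upperCentralSeries G 2 := by
        intro x hx
        rw [show (2 : ℕ) = 1 + 1 from rfl]; refine (mem_upperCentralSeries_succ_iff (n := 1)).mpr ?_; simp only [commutatorElement_def]
        intro y
        rw [upperCentralSeries_one]
        have hxy : x * y * x⁻¹ * y⁻¹ = 1 := by
          rw [Subgroup.mem_center_iff] at hx
          rw [← hx y]; group
        rw [hxy]; exact Subgroup.one_mem _
      -- the subgroup W = Ω₁(Z₂)
      let W : Subgroup G :=
        { carrier := {x : G | x ∈ upperCentralSeries G 2 ∧ x ^ p = 1}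
          one_mem' := ⟨Subgroup.one_mem _, one_pow p⟩
          mul_mem' := by
            rintro x y ⟨hx2, hxp⟩ ⟨hy2, hyp⟩
            exact ⟨mul_mem hx2 hy2, by rw [expand_pow hgen hodd hx2 y, hxp, hyp, one_mul]⟩
          inv_mem' := by
            rintro x ⟨hx2, hxp⟩
            exact ⟨inv_mem hx2, by rw [inv_pow, hxp, inv_one]⟩ }
      have hmemW : ∀ x : G, x ∈ W ↔ (x ∈ upperCentralSeries G 2 ∧ x ^ p = 1) := fun _ => Iff.rfl
      haveI hWn : W.Normal := by
        constructor
        intro x hx g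
        obtain ⟨hx2, hxp⟩ := (hmemW x).mp hx
        refine (hmemW _).mpr ⟨?_, ?_⟩
        · exact (inferInstance : (Subgroup.upperCentralSeries G 2).Normal).conj_mem x hx2 g
        · rw [conj_pow, hxp, mul_one, mul_inv_cancel]
      have hWle : ∀ x : G, x ∈ W → x ∈ Subgroup.center G := fun x hx =>
        hWZ x ((hmemW x).mp hx).1 ((hmemW x).mp hx).2
      set π := QuotientGroup.mk' W with hπ
      have hπsurj : Function.Surjective π := QuotientGroup.mk'_surjective W
      have hπker : ∀ g : G, π g = 1 ↔ g ∈ W := fun g => QuotientGroup.eq_one_iff g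
      by_cases hQab : ∀ u v : G ⧸ W, u * v = v * u
      · -- quotient abelian : Z₂ = ⊤, so any non-central generator works
        have hZ2top : ∀ x : G, x ∈ upperCentralSeries G 2 := by
          intro x
          rw [show (2 : ℕ) = 1 + 1 from rfl]; refine (mem_upperCentralSeries_succ_iff (n := 1)).mpr ?_; simp only [commutatorElement_def]
          intro y
          rw [upperCentralSeries_one]
          refine hWle _ ((hπker _).mp ?_)
          rw [map_mul, map_mul, map_mul, map_inv, map_inv]
          rw [hQab (π x) (π y)]
          group
        have hex : ∃ g : G, orderOf g = p ∧ g ∉ Subgroup.center G := by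
          by_contra hall
          push_neg at hall
          have hle : Subgroup.closure {g : G | orderOf g = p} ≤ Subgroup.center G :=
            (Subgroup.closure_le _).mpr (fun g hg => hall g hg)
          rw [hgen] at hle
          exact hab (Subgroup.mem_center_iff.mp (hle (Subgroup.mem_top a)) b).symm
        obtain ⟨g, hgp, hgZ⟩ := hex
        exact hgZ (hcon g hgp (hZ2top g))
      · -- quotient non-abelian : use induction hypothesis
        push_neg at hQab
        -- W is nontrivial
        obtain ⟨w, hwW, hwne⟩ : ∃ w : G, w ∈ W ∧ w ≠ 1 := by
          haveI := hpG.center_nontrivial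
          have hpZ : IsPGroup p (Subgroup.center G) := hpG.to_subgroup _
          have hdvd : p ∣ Nat.card (Subgroup.center G) := by
            obtain ⟨k, hk⟩ := IsPGroup.iff_card.mp hpZ
            have h1 : 1 < Nat.card (Subgroup.center G) :=
              Finite.one_lt_card_iff_nontrivial.mpr inferInstance
            cases k with
            | zero => rw [hk, pow_zero] at h1; omega
            | succ k => rw [hk, pow_succ]; exact dvd_mul_left p _
          obtain ⟨zc, hzc⟩ := exists_prime_orderOf_dvd_card' p hdvd
          have hzord : orderOf ((zc : G)) = p := by
            rw [← hzc]
            exact orderOf_injective (Subgroup.center G).subtype Subtype.coe_injective zc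
          refine ⟨(zc : G), (hmemW _).mpr ⟨hcen2 zc.2, ?_⟩, ?_⟩
          · rw [← hzord]; exact pow_orderOf_eq_one _
          · intro h1
            rw [h1, orderOf_one] at hzord
            exact hp.one_lt.ne' hzord.symm
        have hcardQ : Nat.card (G ⧸ W) ≤ n := by
          have h1 : Nat.card G = Nat.card (G ⧸ W) * Nat.card W :=
            Subgroup.card_eq_card_quotient_mul_card_subgroup W
          have h2 : 1 < Nat.card W := by
            refine Finite.one_lt_card_iff_nontrivial.mpr ⟨⟨⟨w, hwW⟩, 1, fun h => hwne ?_⟩⟩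
            exact congrArg Subtype.val h
          have h3 : 0 < Nat.card (G ⧸ W) := Nat.card_pos
          have h5 : Nat.card (G ⧸ W) * 2 ≤ Nat.card (G ⧸ W) * Nat.card W :=
            Nat.mul_le_mul_left _ h2
          omega
        have hpQ : IsPGroup p (G ⧸ W) := hpG.to_quotient W
        have hgenQ : Subgroup.closure {q : G ⧸ W | orderOf q = p} = ⊤ := by
          have h1 : Subgroup.map π (Subgroup.closure {g : G | orderOf g = p}) = ⊤ := by
            rw [hgen]
            exact Subgroup.map_top_of_surjective π hπsurj
          rw [MonoidHom.map_closure] at h1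
          refine le_antisymm le_top ?_
          rw [← h1]
          refine (Subgroup.closure_le _).mpr ?_
          rintro q ⟨g, hg, rfl⟩
          have hdvd : orderOf (π g) ∣ p := by rw [← hg]; exact orderOf_map_dvd π g
          rcases (Nat.Prime.eq_one_or_self_of_dvd hp _ hdvd) with h | h
          · rw [orderOf_eq_one_iff.mp h]; exact Subgroup.one_mem _
          · exact Subgroup.subset_closure h
        obtain ⟨tb, htb_ord, htb_ucs, htb_nZ⟩ := ih (G ⧸ W) hcardQ hpQ hQab hgenQ
        obtain ⟨t, rfl⟩ := hπsurj tb
        -- t is not in Z₂(G)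
        have htn2 : t ∉ upperCentralSeries G 2 := by
          intro ht2
          apply htb_nZ
          rw [Subgroup.mem_center_iff]
          intro u
          obtain ⟨y, rfl⟩ := hπsurj u
          have hyW : t * y * t⁻¹ * y⁻¹ ∈ W :=
            (hmemW _).mpr ⟨hcen2 (comm_central ht2 y), comm_pow_one hgen ht2 y⟩
          have h1 : π t * π y * (π t)⁻¹ * (π y)⁻¹ = 1 := by
            rw [← map_inv, ← map_inv, ← map_mul, ← map_mul, ← map_mul]
            exact (hπker _).mpr hyW
          rw [mul_inv_eq_one, mul_inv_eq_iff_eq_mul] at h1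
          exact h1.symm
        -- there is a generator of order p whose commutator with t is not central
        obtain ⟨g, hgord, hgnc⟩ :
            ∃ g : G, orderOf g = p ∧ t * g * t⁻¹ * g⁻¹ ∉ Subgroup.center G := by
          by_contra hall
          push_neg at hall
          apply htn2
          rw [show (2 : ℕ) = 1 + 1 from rfl]; refine (mem_upperCentralSeries_succ_iff (n := 1)).mpr ?_; simp only [commutatorElement_def]
          intro y
          rw [upperCentralSeries_one]
          have hy : y ∈ Subgroup.closure {g : G | orderOf g = p} := by rw [hgen]; trivial
          induction hy using Subgroup.closure_induction with
          | mem g hg => exact hall g hg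
          | one =>
              have h1 : t * 1 * t⁻¹ * 1⁻¹ = 1 := by group
              rw [h1]; exact Subgroup.one_mem _
          | mul y z hy hz ihy ihz =>
              rw [comm_mul_helper t y z _ rfl (Subgroup.mem_center_iff.mp ihz)]
              exact mul_mem ihy ihz
          | inv y hy ihy =>
              rw [comm_inv_helper t y _ rfl (Subgroup.mem_center_iff.mp ihy)]
              exact inv_mem ihy
        -- the commutator c is in Z₂(G)
        set c := t * g * t⁻¹ * g⁻¹ with hcdef
        have hπc_cen : π c ∈ Subgroup.center (G ⧸ W) := by
          have : π c = π t * π g * (π t)⁻¹ * (π g)⁻¹ := by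
            rw [hcdef, map_mul, map_mul, map_mul, map_inv, map_inv]
          rw [this]
          exact comm_central htb_ucs (π g)
        have hc2 : c ∈ upperCentralSeries G 2 := by
          rw [show (2 : ℕ) = 1 + 1 from rfl]; refine (mem_upperCentralSeries_succ_iff (n := 1)).mpr ?_; simp only [commutatorElement_def]
          intro y
          rw [upperCentralSeries_one]
          refine hWle _ ((hπker _).mp ?_)
          rw [map_mul, map_mul, map_mul, map_inv, map_inv]
          have hcy : π y * π c = π c * π y := Subgroup.mem_center_iff.mp hπc_cen (π y)
          rw [← hcy]
          group
        -- c has order dividing p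
        have hgp : g ^ p = 1 := by rw [← hgord]; exact pow_orderOf_eq_one g
        have hcp : c ^ p = 1 := by
          have h1 : (c * g) ^ p = c ^ p * g ^ p := expand_pow hgen hodd hc2 g
          have h2 : c * g = t * g * t⁻¹ := by rw [hcdef]; group
          have h3 : (t * g * t⁻¹) ^ p = 1 := by rw [conj_pow, hgp, mul_one, mul_inv_cancel]
          rw [h2, h3, hgp, mul_one] at h1
          exact h1.symm
        exact hgnc (hWle c ((hmemW c).mpr ⟨hc2, hcp⟩))

end MainAux

/-- Let `p` be an odd prime and `G` a finite non-abelian `p`-group generated by its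
elements of order `p`. Then there is an element of order `p` in `Z₂(G) \ Z(G)`. -/
theorem stmt_0 (p : ℕ) (hp : p.Prime) (hodd : Odd p)
    (G : Type*) [Group G] [Finite G] (hpG : IsPGroup p G)
    (hnonab : ∃ a b : G, a * b ≠ b * a)
    (hgen : Subgroup.closure {g : G | orderOf g = p} = ⊤) :
    ∃ t : G, orderOf t = p ∧ t ∈ upperCentralSeries G 2 ∧ t ∉ Subgroup.center G := by
  exact aux_main p hp hodd (Nat.card G) G le_rfl hpG hnonab hgen
end

section
/- Let p be an odd prime and let G be a finite non-abelian p-group which is generated by its elements of order p. Then there exist elements x, y ∈ G, both of order p, such that x and y do not commute and (xy)^p = 1 (so the product xy has order p). In other words, no finite p-group for odd p can be non-abelian, generated by elements of order p, and have the property that every product of two non-commuting elements of order p has order greater than p. -/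
private lemma auxNCT {p : ℕ} (hp : p.Prime) :
    ∀ n : ℕ, ∀ (G : Type u) [Group G] [Finite G], IsPGroup p G → Nat.card G ≤ n →
      ∀ x : G, Subgroup.normalClosure {x} = ⊤ → ∀ a : G, a ∈ Subgroup.zpowers x := by
  haveI : Fact p.Prime := ⟨hp⟩
  intro n
  induction n with
  | zero =>
    intro G _ _ _ hcard x hx a
    have : 0 < Nat.card G := Nat.card_pos
    omega
  | succ n ih =>
    intro G _ _ hpG hcard x hx a
    by_cases hnt : Nontrivial G
    · haveI := hnt
      have hZ : Nontrivial (Subgroup.center G) := hpG.center_nontrivial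
      let f := QuotientGroup.mk' (Subgroup.center G)
      have hsurj : Function.Surjective f := QuotientGroup.mk'_surjective _
      have hpQ : IsPGroup p (G ⧸ Subgroup.center G) := hpG.to_quotient _
      have hcards : Nat.card G = Nat.card (G ⧸ Subgroup.center G) * Nat.card (Subgroup.center G) :=
        Subgroup.card_eq_card_quotient_mul_card_subgroup _
      have h2 : 1 < Nat.card (Subgroup.center G) :=
        (Finite.one_lt_card_iff_nontrivial).mpr hZ
      have hqpos : 0 < Nat.card (G ⧸ Subgroup.center G) := Nat.card_pos
      have hle : Nat.card (G ⧸ Subgroup.center G) ≤ n := by nlinarith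
      have hnc : Subgroup.normalClosure {f x} = ⊤ := by
        have h1 := Subgroup.map_normalClosure {x} f hsurj
        rw [hx, Set.image_singleton] at h1
        rw [← h1]
        exact Subgroup.map_top_of_surjective f hsurj
      have hq := ih (G ⧸ Subgroup.center G) hpQ hle (f x) hnc
      have hker : ∀ g : G, f g = 1 → g ∈ Subgroup.center G := by
        intro g hg
        rw [← QuotientGroup.ker_mk' (Subgroup.center G)]
        exact hg
      have hcomm : ∀ a b : G, a * b = b * a := by
        intro a b
        obtain ⟨k, hk⟩ := Subgroup.mem_zpowers_iff.mp (hq (f a))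
        obtain ⟨m, hm⟩ := Subgroup.mem_zpowers_iff.mp (hq (f b))
        have hka : x ^ k * a⁻¹ ∈ Subgroup.center G := by
          apply hker
          rw [map_mul, map_inv, map_zpow]
          show f x ^ k * (f a)⁻¹ = 1
          rw [hk, mul_inv_cancel]
        have hmb : x ^ m * b⁻¹ ∈ Subgroup.center G := by
          apply hker
          rw [map_mul, map_inv, map_zpow]
          show f x ^ m * (f b)⁻¹ = 1
          rw [hm, mul_inv_cancel]
        set u := x ^ k * a⁻¹ with hu
        set v := x ^ m * b⁻¹ with hv
        have ha' : a = u⁻¹ * x ^ k := by rw [hu]; group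
        have hb' : b = v⁻¹ * x ^ m := by rw [hv]; group
        have hcu : ∀ g : G, g * u⁻¹ = u⁻¹ * g := fun g =>
          Subgroup.mem_center_iff.mp ((Subgroup.center G).inv_mem hka) g
        have hcv : ∀ g : G, g * v⁻¹ = v⁻¹ * g := fun g =>
          Subgroup.mem_center_iff.mp ((Subgroup.center G).inv_mem hmb) g
        rw [ha', hb']
        calc u⁻¹ * x ^ k * (v⁻¹ * x ^ m)
            = u⁻¹ * (x ^ k * v⁻¹) * x ^ m := by group
          _ = u⁻¹ * (v⁻¹ * x ^ k) * x ^ m := by rw [hcv (x ^ k)]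
          _ = u⁻¹ * v⁻¹ * (x ^ k * x ^ m) := by group
          _ = u⁻¹ * v⁻¹ * (x ^ m * x ^ k) := by rw [← zpow_add, ← zpow_add, add_comm]
          _ = v⁻¹ * u⁻¹ * (x ^ m * x ^ k) := by rw [← hcu v⁻¹]
          _ = v⁻¹ * (u⁻¹ * x ^ m) * x ^ k := by group
          _ = v⁻¹ * (x ^ m * u⁻¹) * x ^ k := by rw [hcu (x ^ m)]
          _ = v⁻¹ * x ^ m * (u⁻¹ * x ^ k) := by group
      haveI : (Subgroup.zpowers x).Normal := by
        constructor
        intro g hg h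
        rw [show h * g * h⁻¹ = g by rw [hcomm h g]; group]
        exact hg
      have : Subgroup.normalClosure {x} ≤ Subgroup.zpowers x :=
        Subgroup.normalClosure_le_normal (by simp [Subgroup.mem_zpowers])
      exact this (hx ▸ Subgroup.mem_top a)
    · have : Subsingleton G := not_nontrivial_iff_subsingleton.mp hnt
      rw [Subsingleton.elim a 1]
      exact Subgroup.one_mem _

private lemma auxPF {G : Type u} [Group G] (a y : G) (n : ℕ) :
    (a * y) ^ n = ((List.range n).map (fun i => y ^ i * a * (y ^ i)⁻¹)).prod * y ^ n := by
  induction n with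
  | zero => simp
  | succ n ih =>
    rw [pow_succ, ih, List.range_succ, List.map_append, List.prod_append]
    simp only [List.map_cons, List.map_nil, List.prod_cons, List.prod_nil]
    rw [pow_succ y n]
    group

/-- Let `p` be an odd prime and `G` a finite non-abelian `p`-group generated by its
elements of order `p`. Then there are two non-commuting elements `x, y` of order `p`
whose product `x * y` satisfies `(x * y) ^ p = 1` (so it has order `p`, not more). -/
theorem stmt_1 (p : ℕ) (hp : p.Prime) (hodd : Odd p)
    (G : Type*) [Group G] [Finite G] (hpG : IsPGroup p G)
    (hnonab : ∃ a b : G, a * b ≠ b * a)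
    (hgen : Subgroup.closure {g : G | orderOf g = p} = ⊤) :
    ∃ x y : G, orderOf x = p ∧ orderOf y = p ∧ x * y ≠ y * x ∧ (x * y) ^ p = 1 := by
  have aux_normalClosure_top : ∀ n : ℕ, ∀ (K : Subgroup G), IsPGroup p K → Nat.card K ≤ n →
      ∀ x : K, Subgroup.normalClosure {x} = ⊤ → ∀ a : K, a ∈ Subgroup.zpowers x :=
    fun n K hk hc => auxNCT hp n K hk hc
  have aux_prod_form : ∀ (a y : G) (n : ℕ),
      (a * y) ^ n = ((List.range n).map (fun i => y ^ i * a * (y ^ i)⁻¹)).prod * y ^ n :=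
    fun a y n => auxPF a y n
  haveI : Fact p.Prime := ⟨hp⟩
  classical
  -- Step 1: there exist two non-commuting elements of order p
  have hexists : ∃ x y : G, orderOf x = p ∧ orderOf y = p ∧ x * y ≠ y * x := by
    by_contra h
    push_neg at h
    obtain ⟨a, b, hab⟩ := hnonab
    apply hab
    have hcomm : ∀ u ∈ Subgroup.closure {g : G | orderOf g = p},
        ∀ v ∈ Subgroup.closure {g : G | orderOf g = p}, Commute u v := by
      intro u hu v hv
      induction hu, hv using Subgroup.closure_induction₂ with
      | mem a b ha hb => exact h a b ha hb
      | one_left x hx => exact Commute.one_left x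
      | one_right x hx => exact Commute.one_right x
      | mul_left x y z hx hy hz h1 h2 => exact h1.mul_left h2
      | mul_right y z x hy hz hx h1 h2 => exact h1.mul_right h2
      | inv_left x y hx hy h1 => exact h1.inv_left
      | inv_right x y hx hy h1 => exact h1.inv_right
    exact hcomm a (hgen ▸ Subgroup.mem_top a) b (hgen ▸ Subgroup.mem_top b)
  obtain ⟨x0, y0, hx0, hy0, hxy0⟩ := hexists
  -- Step 2: choose a minimal pair
  set s : Set ℕ := {n | ∃ x y : G, orderOf x = p ∧ orderOf y = p ∧ x * y ≠ y * x ∧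
    Nat.card (Subgroup.closure ({x, y} : Set G)) = n} with hs
  have hsne : s.Nonempty := ⟨_, x0, y0, hx0, hy0, hxy0, rfl⟩
  obtain ⟨x, y, hx, hy, hxy, hcard⟩ := Nat.sInf_mem hsne
  have hmin : ∀ u v : G, orderOf u = p → orderOf v = p → u * v ≠ v * u →
      Nat.card (Subgroup.closure ({x, y} : Set G)) ≤
        Nat.card (Subgroup.closure ({u, v} : Set G)) := by
    intro u v hu hv huv
    rw [hcard]
    exact Nat.sInf_le ⟨u, v, hu, hv, huv, rfl⟩
  have hxp : x ^ p = 1 := by rw [← hx]; exact pow_orderOf_eq_one x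
  have hyp : y ^ p = 1 := by rw [← hy]; exact pow_orderOf_eq_one y
  have conj_ord : ∀ g z : G, orderOf (g * z * g⁻¹) = orderOf z := fun g z =>
    (SemiconjBy.orderOf_eq g (show g * z = (g * z * g⁻¹) * g by group)).symm
  by_cases hA : ∀ i j : ℕ, (y ^ i * x * (y ^ i)⁻¹) * (y ^ j * x * (y ^ j)⁻¹)
      = (y ^ j * x * (y ^ j)⁻¹) * (y ^ i * x * (y ^ i)⁻¹)
  · -- Case A : all conjugates of x under powers of y commute
    set B := Subgroup.closure (Set.range (fun i : ℕ => y ^ i * x * (y ^ i)⁻¹)) with hB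
    have hxB : x ∈ B := Subgroup.subset_closure ⟨0, by simp⟩
    have hBcomm : ∀ u ∈ B, ∀ v ∈ B, Commute u v := by
      intro u hu v hv
      induction hu, hv using Subgroup.closure_induction₂ with
      | mem a b ha hb =>
        obtain ⟨i, rfl⟩ := ha
        obtain ⟨j, rfl⟩ := hb
        exact hA i j
      | one_left x hx => exact Commute.one_left x
      | one_right x hx => exact Commute.one_right x
      | mul_left x y z hx hy hz h1 h2 => exact h1.mul_left h2
      | mul_right y z x hy hz hx h1 h2 => exact h1.mul_right h2
      | inv_left x y hx hy h1 => exact h1.inv_left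
      | inv_right x y hx hy h1 => exact h1.inv_right
    have hBpow : ∀ b ∈ B, b ^ p = 1 := by
      intro b hb
      induction hb using Subgroup.closure_induction with
      | mem g hg =>
        obtain ⟨i, rfl⟩ := hg
        show (y ^ i * x * (y ^ i)⁻¹) ^ p = 1
        rw [conj_pow, hxp]
        group
      | one => exact one_pow p
      | mul a b ha hb h1 h2 => rw [(hBcomm a ha b hb).mul_pow, h1, h2, one_mul]
      | inv a ha h1 => rw [inv_pow, h1, inv_one]
    have hyB : ∀ b ∈ B, y * b * y⁻¹ ∈ B := by
      intro b hb
      induction hb using Subgroup.closure_induction with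
      | mem g hg =>
        obtain ⟨i, rfl⟩ := hg
        exact Subgroup.subset_closure ⟨i + 1, by group⟩
      | one => simpa using B.one_mem
      | mul a b ha hb h1 h2 =>
        rw [show y * (a * b) * y⁻¹ = (y * a * y⁻¹) * (y * b * y⁻¹) by group]
        exact B.mul_mem h1 h2
      | inv a ha h1 =>
        rw [show y * a⁻¹ * y⁻¹ = (y * a * y⁻¹)⁻¹ by group]
        exact B.inv_mem h1
    have hynB : ∀ m : ℕ, ∀ b ∈ B, y ^ m * b * (y ^ m)⁻¹ ∈ B := by
      intro m
      induction m with
      | zero => intro b hb; simpa using hb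
      | succ m ih =>
        intro b hb
        rw [show y ^ (m + 1) * b * (y ^ (m + 1))⁻¹ = y * (y ^ m * b * (y ^ m)⁻¹) * y⁻¹ by
          rw [pow_succ y m]; group]
        exact hyB _ (ih b hb)
    by_cases hA2 : ∀ b ∈ B, y * (y * b * y⁻¹ * b⁻¹) * y⁻¹ = y * b * y⁻¹ * b⁻¹
    · -- Subcase A2 : take the pair (x, y)
      refine ⟨x, y, hx, hy, hxy, ?_⟩
      set d := y * x * y⁻¹ * x⁻¹ with hd
      have hyxyB : y * x * y⁻¹ ∈ B := Subgroup.subset_closure ⟨1, by simp⟩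
      have hdB : d ∈ B := B.mul_mem hyxyB (B.inv_mem hxB)
      have hxd : Commute x d := hBcomm x hxB d hdB
      have hTd : y * d * y⁻¹ = d := hA2 x hxB
      have hsn : ∀ m : ℕ, y ^ m * x * (y ^ m)⁻¹ = x * d ^ m := by
        intro m
        induction m with
        | zero => simp
        | succ m ih =>
          rw [show y ^ (m + 1) * x * (y ^ (m + 1))⁻¹ = y * (y ^ m * x * (y ^ m)⁻¹) * y⁻¹ by
            rw [pow_succ y m]; group]
          rw [ih, show y * (x * d ^ m) * y⁻¹ = (y * x * y⁻¹) * (y * d ^ m * y⁻¹) by group,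
            ← conj_pow, hTd, show y * x * y⁻¹ = d * x by rw [hd]; group,
            ← hxd.eq, pow_succ' d m, mul_assoc]
      have hP : ∀ m : ℕ, ((List.range m).map (fun i => y ^ i * x * (y ^ i)⁻¹)).prod
          = x ^ m * d ^ (∑ i ∈ Finset.range m, i) := by
        intro m
        induction m with
        | zero => simp
        | succ m ih =>
          rw [List.range_succ, List.map_append, List.prod_append, ih]
          simp only [List.map_cons, List.map_nil, List.prod_cons, List.prod_nil, mul_one]
          rw [hsn m, Finset.sum_range_succ, pow_add d _ m]
          have h1 : d ^ (∑ i ∈ Finset.range m, i) * x = x * d ^ (∑ i ∈ Finset.range m, i) :=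
            ((hxd.pow_right _).symm).eq
          calc x ^ m * d ^ (∑ i ∈ Finset.range m, i) * (x * d ^ m)
              = x ^ m * (d ^ (∑ i ∈ Finset.range m, i) * x) * d ^ m := by group
            _ = x ^ m * (x * d ^ (∑ i ∈ Finset.range m, i)) * d ^ m := by rw [h1]
            _ = x ^ m * x * (d ^ (∑ i ∈ Finset.range m, i) * d ^ m) := by group
            _ = x ^ (m + 1) * (d ^ (∑ i ∈ Finset.range m, i) * d ^ m) := by rw [pow_succ]
      obtain ⟨k, hk⟩ := hodd
      have hep : (∑ i ∈ Finset.range p, i) = p * k := by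
        have h2 : (∑ i ∈ Finset.range p, i) * 2 = p * (p - 1) := Finset.sum_range_id_mul_two p
        have h3 : p * (p - 1) = (p * k) * 2 := by
          rw [show p - 1 = 2 * k from by omega]; ring
        exact Nat.eq_of_mul_eq_mul_right (by norm_num) (h2.trans h3)
      rw [aux_prod_form x y p, hP p, hxp, hyp, hep, pow_mul, hBpow d hdB, one_pow]
      simp
    · -- Subcase A1 : a good pair inside B
      push_neg at hA2
      obtain ⟨b, hbB, hne⟩ := hA2
      set a := y * b * y⁻¹ * b⁻¹ with ha
      have haB : a ∈ B := B.mul_mem (hyB b hbB) (B.inv_mem hbB)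
      have ha1 : a ≠ 1 := by
        intro h
        apply hne
        rw [h]
        simp
      have haord : orderOf a = p := orderOf_eq_prime (hBpow a haB) ha1
      have hay : a * y ≠ y * a := by
        intro h
        apply hne
        rw [← h]
        group
      refine ⟨a, y, haord, hy, hay, ?_⟩
      have hP : ∀ m : ℕ, ((List.range m).map (fun i => y ^ i * a * (y ^ i)⁻¹)).prod
          = (y ^ m * b * (y ^ m)⁻¹) * b⁻¹ := by
        intro m
        induction m with
        | zero => simp
        | succ m ih =>
          rw [List.range_succ, List.map_append, List.prod_append, ih]
          simp only [List.map_cons, List.map_nil, List.prod_cons, List.prod_nil, mul_one]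
          have hsplit : y ^ m * a * (y ^ m)⁻¹
              = (y ^ (m + 1) * b * (y ^ (m + 1))⁻¹) * (y ^ m * b * (y ^ m)⁻¹)⁻¹ := by
            rw [ha, pow_succ y m]; group
          rw [hsplit]
          have h0B : y ^ m * b * (y ^ m)⁻¹ ∈ B := hynB m b hbB
          have h1B : y ^ (m + 1) * b * (y ^ (m + 1))⁻¹ ∈ B := hynB (m + 1) b hbB
          have c1 : Commute b⁻¹ (y ^ (m + 1) * b * (y ^ (m + 1))⁻¹) :=
            hBcomm b⁻¹ (B.inv_mem hbB) _ h1B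
          have c0 : Commute (y ^ m * b * (y ^ m)⁻¹) (y ^ (m + 1) * b * (y ^ (m + 1))⁻¹) :=
            hBcomm _ h0B _ h1B
          have c2 : Commute (y ^ m * b * (y ^ m)⁻¹) b⁻¹ :=
            hBcomm _ h0B b⁻¹ (B.inv_mem hbB)
          set t0 := y ^ m * b * (y ^ m)⁻¹
          set t1 := y ^ (m + 1) * b * (y ^ (m + 1))⁻¹
          calc t0 * b⁻¹ * (t1 * t0⁻¹)
              = t0 * (b⁻¹ * t1) * t0⁻¹ := by group
            _ = t0 * (t1 * b⁻¹) * t0⁻¹ := by rw [c1.eq]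
            _ = (t0 * t1) * (b⁻¹ * t0⁻¹) := by group
            _ = (t1 * t0) * (b⁻¹ * t0⁻¹) := by rw [c0.eq]
            _ = t1 * (t0 * b⁻¹ * t0⁻¹) := by group
            _ = t1 * (b⁻¹ * t0 * t0⁻¹) := by rw [c2.eq]
            _ = t1 * b⁻¹ := by group
      rw [aux_prod_form a y p, hP p, hyp]
      simp
  · -- Case B : two non-commuting conjugates, contradiction with minimality
    push_neg at hA
    obtain ⟨i, j, hij⟩ := hA
    exfalso
    set K := Subgroup.closure ({x, y} : Set G) with hK
    have hxK : x ∈ K := Subgroup.subset_closure (by simp)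
    have hyK : y ∈ K := Subgroup.subset_closure (by simp)
    set N' : Subgroup K := Subgroup.normalClosure {(⟨x, hxK⟩ : K)} with hN'
    have hNtop : N' ≠ ⊤ := by
      intro htop
      have hzp := aux_normalClosure_top (Nat.card K) K (hpG.to_subgroup K) le_rfl
        (⟨x, hxK⟩ : K) htop (⟨y, hyK⟩ : K)
      obtain ⟨k, hk⟩ := Subgroup.mem_zpowers_iff.mp hzp
      apply hxy
      have hcomm : (⟨x, hxK⟩ : K) * (⟨y, hyK⟩ : K) = (⟨y, hyK⟩ : K) * (⟨x, hxK⟩ : K) := by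
        rw [← hk]
        exact ((Commute.refl (⟨x, hxK⟩ : K)).zpow_right k)
      exact congrArg Subtype.val hcomm
    have hle : Nat.card N' ≤ Nat.card K := by
      have h1 := Subgroup.card_le_of_le (le_top : N' ≤ ⊤)
      rwa [Subgroup.card_top] at h1
    have hltK : Nat.card N' < Nat.card K :=
      lt_of_le_of_ne hle (fun h => hNtop (Subgroup.eq_top_of_card_eq _ h))
    have hmem : ∀ m : ℕ, y ^ m * x * (y ^ m)⁻¹ ∈ Subgroup.map K.subtype N' := by
      intro m
      have hx'N : (⟨x, hxK⟩ : K) ∈ N' := Subgroup.subset_normalClosure rfl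
      have hc : ((⟨y, hyK⟩ : K) ^ m) * ⟨x, hxK⟩ * ((⟨y, hyK⟩ : K) ^ m)⁻¹ ∈ N' :=
        Subgroup.normalClosure_normal.conj_mem _ hx'N _
      refine ⟨_, hc, ?_⟩
      rw [map_mul, map_mul, map_inv, map_pow]
      rfl
    have hsub : Subgroup.closure ({y ^ i * x * (y ^ i)⁻¹, y ^ j * x * (y ^ j)⁻¹} : Set G)
        ≤ Subgroup.map K.subtype N' := by
      rw [Subgroup.closure_le]
      intro g hg
      simp only [Set.mem_insert_iff, Set.mem_singleton_iff] at hg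
      rcases hg with rfl | rfl
      · exact hmem i
      · exact hmem j
    have h1 : Nat.card (Subgroup.closure ({y ^ i * x * (y ^ i)⁻¹, y ^ j * x * (y ^ j)⁻¹} : Set G))
        ≤ Nat.card (Subgroup.map K.subtype N') := Subgroup.card_le_of_le hsub
    have h2 : Nat.card (Subgroup.map K.subtype N') = Nat.card N' :=
      (Nat.card_congr (Subgroup.equivMapOfInjective N' K.subtype K.subtype_injective).toEquiv).symm
    have h3 := hmin _ _ ((conj_ord (y ^ i) x).trans hx) ((conj_ord (y ^ j) x).trans hx) hij
    omega
end

section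
/- Let p be a prime and let k, c be integers with 1 ≤ k ≤ p−1 and c ≥ k. Then there exists a finite p-group G of nilpotency class c whose spectrum is exactly {1, 2, …, k}; that is, for every i ≥ 1 there is an element of order p in Z_i(G) \ Z_{i-1}(G) if and only if 1 ≤ i ≤ k. -/
open Finset

/-- Auxiliary construction: `R × ZMod q` with multiplication twisted by powers of a unit `u`. -/
@[ext]
structure Gr (R : Type) (q : ℕ) : Type where
  a : R
  b : ZMod q

/-- The data of the twisting unit. -/
class GrData (R : Type) [CommRing R] (q : ℕ) where
  u : Rˣ
  hu : u ^ q = 1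

namespace Gr

variable {R : Type} [CommRing R] {q : ℕ} [NeZero q] [GrData R q]

/-- The twisting exponential. -/
def e (b : ZMod q) : Rˣ := (GrData.u (R := R) (q := q)) ^ b.val

lemma e_add (b b' : ZMod q) : e (R := R) (b + b') = e b * e b' := by
  unfold e
  rw [← pow_add]
  conv_rhs => rw [← Nat.mod_add_div (b.val + b'.val) q]
  rw [pow_add, pow_mul, GrData.hu, one_pow, mul_one, ZMod.val_add]

lemma e_zero : e (R := R) (0 : ZMod q) = 1 := by
  unfold e; rw [ZMod.val_zero, pow_zero]

lemma e_neg_mul (b : ZMod q) : (e (R := R) (-b)).val * (e b).val = 1 := by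
  rw [← Units.val_mul, ← e_add, neg_add_cancel, e_zero, Units.val_one]

lemma e_mul_neg (b : ZMod q) : (e (R := R) b).val * (e (-b)).val = 1 := by
  rw [← Units.val_mul, ← e_add, add_neg_cancel, e_zero, Units.val_one]

instance : Mul (Gr R q) := ⟨fun x y => ⟨x.a + (e x.b).val * y.a, x.b + y.b⟩⟩
instance : One (Gr R q) := ⟨⟨0, 0⟩⟩
instance : Inv (Gr R q) := ⟨fun x => ⟨-((e (-x.b)).val * x.a), -x.b⟩⟩

lemma mul_def (x y : Gr R q) : x * y = ⟨x.a + (e x.b).val * y.a, x.b + y.b⟩ := rfl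
lemma one_def : (1 : Gr R q) = ⟨0, 0⟩ := rfl
lemma inv_def (x : Gr R q) : x⁻¹ = ⟨-((e (-x.b)).val * x.a), -x.b⟩ := rfl

instance instGroup : Group (Gr R q) where
  mul_assoc x y z := by
    apply Gr.ext <;> simp only [mul_def, e_add, Units.val_mul]
    · ring
    · exact add_assoc _ _ _
  one_mul x := by apply Gr.ext <;> simp [mul_def, one_def, e_zero]
  mul_one x := by apply Gr.ext <;> simp [mul_def, one_def]
  inv_mul_cancel x := by
    apply Gr.ext <;>
      simp [mul_def, inv_def, one_def]

lemma commutator_eq (x y : Gr R q) :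
    x * y * x⁻¹ * y⁻¹ = ⟨((e x.b).val - 1) * y.a - ((e y.b).val - 1) * x.a, 0⟩ := by
  have h2 := e_mul_neg (R := R) x.b
  have h3 := e_mul_neg (R := R) y.b
  apply Gr.ext
  · simp only [mul_def, inv_def, e_add, Units.val_mul]
    linear_combination (-((e y.b).val * x.a) - y.a * (e y.b).val * (e (-y.b)).val) * h2 - y.a * h3
  · simp only [mul_def, inv_def]; ring

lemma e_nsmul (b : ZMod q) (n : ℕ) : (e (R := R) (n • b)).val = ((e b).val) ^ n := by
  induction n with
  | zero => simp [e_zero]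
  | succ m ihm => rw [succ_nsmul, e_add, Units.val_mul, ihm, pow_succ]

lemma pow_eq (x : Gr R q) (n : ℕ) :
    x ^ n = ⟨(∑ j ∈ range n, ((e x.b).val) ^ j) * x.a, n • x.b⟩ := by
  induction n with
  | zero => apply Gr.ext <;> simp [one_def]
  | succ n ih =>
      have he := e_nsmul (R := R) x.b n
      apply Gr.ext
      · rw [pow_succ, ih, mul_def]
        simp only [he, Finset.sum_range_succ]
        ring
      · rw [pow_succ, ih, mul_def]
        simp only [succ_nsmul]

end Gr

namespace Gr

variable {R : Type} [CommRing R] {q : ℕ} [NeZero q] [GrData R q]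

local notation "U" => (GrData.u (R := R) (q := q))

lemma e_val (b : ZMod q) : (e (R := R) b).val = (U : R) ^ b.val := by
  unfold e; exact Units.val_pow_eq_pow_val _ _

lemma e_one_val (hq : 1 < q) : (e (R := R) (1 : ZMod q)).val = (U : R) := by
  haveI : Fact (1 < q) := ⟨hq⟩
  rw [e_val, ZMod.val_one, pow_one]

lemma e_sub_one_dvd {π : R} (hU : (U : R) = 1 + π) (b : ZMod q) :
    π ∣ (e (R := R) b).val - 1 := by
  have h := geom_sum_mul ((U : R)) b.val
  refine ⟨∑ i ∈ Finset.range b.val, (U : R) ^ i, ?_⟩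
  rw [e_val, ← h, mul_comm]
  congr 1
  rw [hU]; ring

lemma eq_one_iff (x : Gr R q) : x = 1 ↔ x.a = 0 ∧ x.b = 0 := by
  constructor
  · intro h; rw [h]; exact ⟨rfl, rfl⟩
  · intro ⟨h1, h2⟩; apply Gr.ext <;> simpa [one_def]

section UCS

variable {π : R} {n : ℕ}
  (hkey : ∀ j (w : R), j + 1 ≤ n → (π ^ (j+1) ∣ π * w ↔ π ^ j ∣ w))
  (hπn : π ^ n = 0)
  (hU : (GrData.u (R := R) (q := q)).val = 1 + π)
  (hq : 1 < q)

include hkey hπn hU hq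

lemma mem_ucs_fst : ∀ i j, i + j = n → ∀ w : R,
    ((⟨w, 0⟩ : Gr R q) ∈ Subgroup.upperCentralSeries (Gr R q) i ↔ π ^ j ∣ w) := by
  intro i
  induction i with
  | zero =>
      intro j hj w
      rw [upperCentralSeries_zero, Subgroup.mem_bot, eq_one_iff]
      simp only [Nat.zero_add] at hj
      subst hj
      rw [hπn, zero_dvd_iff]
      simp
  | succ i ih =>
      intro j hj w
      rw [mem_upperCentralSeries_succ_iff]
      have hij : i + (j + 1) = n := by omega
      constructor
      · intro H
        have := H ⟨0, 1⟩
        rw [commutatorElement_def, commutator_eq] at this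
        rw [ih (j+1) hij] at this
        simp only [e_zero, Units.val_one, sub_self, zero_mul, zero_sub,
          e_one_val hq, dvd_neg] at this
        rw [show ((U : R) - 1) = π by rw [hU]; ring] at this
        exact (hkey j w (by omega)).1 this
      · intro hd y
        rw [commutatorElement_def, commutator_eq, ih (j+1) hij]
        simp only [e_zero, Units.val_one, sub_self, zero_mul, zero_sub, dvd_neg]
        obtain ⟨s, hs⟩ := e_sub_one_dvd (R := R) hU y.b
        rw [hs]
        have : π ^ (j+1) ∣ π * w := (hkey j w (by omega)).2 hd
        calc π ^ (j+1) ∣ π * w := this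
          _ ∣ π * s * w := ⟨s, by ring⟩
        
lemma mem_ucs_iff : ∀ i j, 1 ≤ i → i + j = n → ∀ x : Gr R q,
    (x ∈ Subgroup.upperCentralSeries (Gr R q) i ↔
      π ^ j ∣ x.a ∧ π ^ (j+1) ∣ (e x.b).val - 1) := by
  intro i j hi hij x
  obtain ⟨i', rfl⟩ : ∃ i', i = i' + 1 := ⟨i - 1, by omega⟩
  rw [mem_upperCentralSeries_succ_iff]
  have hij' : i' + (j + 1) = n := by omega
  constructor
  · intro H
    constructor
    · have := H ⟨0, 1⟩
      rw [commutatorElement_def, commutator_eq, mem_ucs_fst hkey hπn hU hq i' (j+1) hij'] at this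
      simp only [e_one_val hq, mul_zero, zero_sub, dvd_neg] at this
      rw [show ((U : R) - 1) = π by rw [hU]; ring] at this
      exact (hkey j x.a (by omega)).1 this
    · have := H ⟨1, 0⟩
      rw [commutatorElement_def, commutator_eq, mem_ucs_fst hkey hπn hU hq i' (j+1) hij'] at this
      simpa only [e_zero, Units.val_one, sub_self, zero_mul, mul_one, sub_zero] using this
  · intro ⟨h1, h2⟩ y
    rw [commutatorElement_def, commutator_eq, mem_ucs_fst hkey hπn hU hq i' (j+1) hij']
    apply dvd_sub
    · exact Dvd.dvd.mul_right h2 _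
    · obtain ⟨s, hs⟩ := e_sub_one_dvd (R := R) hU y.b
      rw [hs]
      have : π ^ (j+1) ∣ π * x.a := (hkey j x.a (by omega)).2 h1
      calc π ^ (j+1) ∣ π * x.a := this
        _ ∣ π * s * x.a := ⟨s, by ring⟩

lemma ucs_top (hn : 1 ≤ n) : Subgroup.upperCentralSeries (Gr R q) n = ⊤ := by
  rw [Subgroup.eq_top_iff']
  intro x
  rw [mem_ucs_iff hkey hπn hU hq n 0 hn (by omega)]
  refine ⟨by rw [pow_zero]; exact one_dvd _, ?_⟩
  rw [pow_one]
  exact e_sub_one_dvd (R := R) hU x.b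

lemma not_pow_dvd [Nontrivial R] : ∀ j, j < n → ¬ (π ^ (j+1) ∣ π ^ j) := by
  intro j
  induction j with
  | zero =>
      intro _ h
      rw [pow_zero, pow_one] at h
      obtain ⟨v, hv⟩ := h
      have : (1 : R) = 0 := by
        calc (1 : R) = 1 ^ n := (one_pow n).symm
          _ = (π * v) ^ n := by rw [← hv]
          _ = π ^ n * v ^ n := mul_pow _ _ _
          _ = 0 := by rw [hπn, zero_mul]
      exact one_ne_zero this
  | succ j ih =>
      intro hjn h
      have h2 : π ^ (j + 1 + 1) ∣ π * π ^ j := by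
        rwa [show π * π ^ j = π ^ (j+1) by ring]
      exact ih (by omega) ((hkey (j+1) (π ^ j) (by omega)).1 h2)

end UCS

lemma pow_q_mul_eq_one {m : ℕ} (hm : (m : R) = 0) (x : Gr R q) : x ^ (q * m) = 1 := by
  rw [pow_mul]
  have hq : x ^ q = ⟨(∑ j ∈ Finset.range q, ((e x.b).val) ^ j) * x.a, 0⟩ := by
    rw [pow_eq]
    congr 1
    rw [nsmul_eq_mul, ZMod.natCast_self, zero_mul]
  rw [hq, pow_eq]
  apply Gr.ext
  · simp only [e_zero, Units.val_one, one_pow, Finset.sum_const, Finset.card_range,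
      nsmul_eq_mul, mul_one, hm, zero_mul, one_def]
  · simp [one_def]
end Gr
section Bfacts

variable {p c : ℕ}

lemma zmod_pi_pow_eq_zero (p c : ℕ) : (p : ZMod (p^c)) ^ c = 0 := by
  rw [← Nat.cast_pow, ZMod.natCast_self]

lemma zmod_key (hp : p.Prime) (j : ℕ) (w : ZMod (p^c)) (hj : j + 1 ≤ c) :
    ((p : ZMod (p^c)) ^ (j+1) ∣ (p : ZMod (p^c)) * w ↔ (p : ZMod (p^c)) ^ j ∣ w) := by
  haveI : NeZero (p ^ c) := ⟨pow_ne_zero _ hp.pos.ne'⟩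
  constructor
  · rintro ⟨y, hy⟩
    have hwv : ((w.val : ℕ) : ZMod (p^c)) = w := ZMod.natCast_rightInverse w
    have hyv : ((y.val : ℕ) : ZMod (p^c)) = y := ZMod.natCast_rightInverse y
    have h1 : (((p : ℤ) * w.val - (p:ℤ)^(j+1) * y.val : ℤ) : ZMod (p^c)) = 0 := by
      push_cast
      rw [hwv, hyv, hy]
      ring
    rw [ZMod.intCast_zmod_eq_zero_iff_dvd] at h1
    obtain ⟨d, hd⟩ := h1
    have hp0 : (p : ℤ) ≠ 0 := Int.natCast_ne_zero.mpr hp.pos.ne'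
    have h2 : (w.val : ℤ) = (p:ℤ)^j * y.val + (p:ℤ)^(c-1) * d := by
      apply mul_left_cancel₀ hp0
      have e1 : ((p:ℤ)^c : ℤ) = p * (p:ℤ)^(c-1) := by
        rw [← pow_succ']
        congr 1
        omega
      push_cast at hd
      rw [e1] at hd
      have e2 : (p:ℤ)^(j+1) = p * (p:ℤ)^j := by ring
      rw [e2] at hd
      push_cast
      linarith
    refine ⟨(y.val : ZMod (p^c)) + (p:ZMod (p^c))^(c-1-j) * (d : ZMod (p^c)), ?_⟩
    have h3 : w = (((p:ℤ)^j * y.val + (p:ℤ)^(c-1) * d : ℤ) : ZMod (p^c)) := by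
      rw [← h2]
      push_cast
      rw [hwv]
    rw [h3]
    have e3 : (p:ZMod (p^c))^(c-1) = (p:ZMod (p^c))^j * (p:ZMod (p^c))^(c-1-j) := by
      rw [← pow_add]
      congr 1
      omega
    push_cast
    rw [e3]
    ring
  · rintro ⟨y, hy⟩
    exact ⟨y, by rw [hy]; ring⟩

lemma zmod_val_dvd (hp : p.Prime) (j : ℕ) (hj : j ≤ c) (b : ZMod (p^c))
    (h : (p : ZMod (p^c)) ^ j ∣ b) : p ^ j ∣ b.val := by
  haveI : NeZero (p ^ c) := ⟨pow_ne_zero _ hp.pos.ne'⟩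
  obtain ⟨z, hz⟩ := h
  have hbv : ((b.val : ℕ) : ZMod (p^c)) = b := ZMod.natCast_rightInverse b
  have hzv : ((z.val : ℕ) : ZMod (p^c)) = z := ZMod.natCast_rightInverse z
  have h1 : (((b.val : ℤ) - (p:ℤ)^j * z.val : ℤ) : ZMod (p^c)) = 0 := by
    push_cast
    rw [hbv, hzv, hz]
    ring
  rw [ZMod.intCast_zmod_eq_zero_iff_dvd] at h1
  obtain ⟨d, hd⟩ := h1
  have : (b.val : ℤ) = (p:ℤ)^j * (z.val + (p:ℤ)^(c-j) * d) := by
    have e1 : ((p:ℤ)^c : ℤ) = (p:ℤ)^j * (p:ℤ)^(c-j) := by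
      rw [← pow_add]
      congr 1
      omega
    push_cast at hd
    rw [e1] at hd
    linarith
  have h2 : ((p:ℤ))^j ∣ (b.val : ℤ) := ⟨_, this⟩
  exact_mod_cast Int.natCast_dvd_natCast.mp (by exact_mod_cast h2)

lemma one_add_pow_step (p s : ℕ) (hp : 2 ≤ p) (hs : 1 ≤ s) (t : ℤ) :
    ∃ t' : ℤ, (1 + (p:ℤ)^s * t)^p = 1 + (p:ℤ)^(s+1) * t' := by
  have hdvd : ∀ x ∈ Finset.range p,
      ((p:ℤ)^(s+1)) ∣ ((p:ℤ)^s*t)^(x+1) * (p.choose (x+1)) := by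
    intro x hx
    rcases Nat.eq_zero_or_pos x with h0 | h1
    · subst h0
      rw [Nat.choose_one_right]
      refine ⟨t, ?_⟩
      push_cast
      ring
    · apply Dvd.dvd.mul_right
      have : ((p:ℤ)^(s+1)) ∣ ((p:ℤ)^s*t)^(x+1) := by
        have : ((p:ℤ)^(s*(x+1))) ∣ ((p:ℤ)^s*t)^(x+1) := by
          rw [mul_pow, ← pow_mul]
          exact Dvd.dvd.mul_right dvd_rfl _
        refine dvd_trans (pow_dvd_pow _ ?_) this
        nlinarith
      exact this
  obtain ⟨T, hT⟩ := Finset.dvd_sum hdvd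
  refine ⟨T, ?_⟩
  have h := add_pow ((p:ℤ)^s * t) 1 p
  rw [Finset.sum_range_succ'] at h
  simp only [one_pow, mul_one, pow_zero, Nat.choose_zero_right, Nat.cast_one, one_mul] at h
  rw [add_comm 1 ((p:ℤ)^s*t), h, hT]
  ring

lemma one_add_p_pow (p : ℕ) (hp : 2 ≤ p) : ∀ j : ℕ, ∃ t : ℤ, (1 + (p:ℤ))^(p^j) = 1 + (p:ℤ)^(j+1) * t := by
  intro j
  induction j with
  | zero => exact ⟨1, by simp⟩
  | succ j ih =>
      obtain ⟨t, ht⟩ := ih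
      obtain ⟨t', ht'⟩ := one_add_pow_step p (j+1) hp (by omega) t
      refine ⟨t', ?_⟩
      rw [pow_succ, pow_mul, ht, ht']

lemma zmod_one_add_p_pow_eq_one (hp : 2 ≤ p) (j : ℕ) (hj : c ≤ j + 1) :
    (1 + (p : ZMod (p^c))) ^ (p ^ j) = 1 := by
  obtain ⟨t, ht⟩ := one_add_p_pow p hp j
  have h1 : ((((1 + (p:ℤ))^(p^j) : ℤ)) : ZMod (p^c)) = ((1 + (p:ℤ)^(j+1) * t : ℤ) : ZMod (p^c)) := by
    rw [ht]
  push_cast at h1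
  rw [h1]
  have e1 : (p:ZMod (p^c))^(j+1) = (p:ZMod (p^c))^c * (p:ZMod (p^c))^(j+1-c) := by
    rw [← pow_add]
    congr 1
    omega
  rw [e1, zmod_pi_pow_eq_zero]
  ring

end Bfacts
section Afacts

open Polynomial

variable {p k : ℕ} [Fact p.Prime]

lemma ra_root_pow : (AdjoinRoot.root (X ^ k : (ZMod p)[X])) ^ k = 0 := by
  rw [← AdjoinRoot.mk_X, ← map_pow, AdjoinRoot.mk_self]

lemma ra_nontrivial (hk : 1 ≤ k) : Nontrivial (AdjoinRoot (X ^ k : (ZMod p)[X])) := by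
  refine ⟨1, 0, fun h => ?_⟩
  have h1 : AdjoinRoot.mk (X^k : (ZMod p)[X]) 1 = 0 := by simpa using h
  rw [AdjoinRoot.mk_eq_zero] at h1
  have h2 : IsUnit ((X : (ZMod p)[X])^k) := isUnit_of_dvd_one h1
  have h3 := Polynomial.natDegree_eq_zero_of_isUnit h2
  rw [Polynomial.natDegree_X_pow] at h3
  omega

lemma ra_key (j : ℕ) (w : AdjoinRoot (X ^ k : (ZMod p)[X])) (hj : j + 1 ≤ k) :
    ((AdjoinRoot.root (X ^ k : (ZMod p)[X])) ^ (j+1) ∣ (AdjoinRoot.root (X ^ k : (ZMod p)[X])) * w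
      ↔ (AdjoinRoot.root (X ^ k : (ZMod p)[X]))^j ∣ w) := by
  set r := AdjoinRoot.root (X ^ k : (ZMod p)[X]) with hr
  constructor
  · rintro ⟨y, hy⟩
    obtain ⟨f, rfl⟩ := AdjoinRoot.mk_surjective w
    obtain ⟨g, rfl⟩ := AdjoinRoot.mk_surjective y
    have h1 : AdjoinRoot.mk (X^k : (ZMod p)[X]) (X * f - X^(j+1) * g) = 0 := by
      rw [map_sub, map_mul, map_mul, map_pow, AdjoinRoot.mk_X, ← hr, hy]
      ring
    rw [AdjoinRoot.mk_eq_zero] at h1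
    obtain ⟨h, hh⟩ := h1
    have h2 : f = X^j * g + X^(k-1) * h := by
      have hX : (X : (ZMod p)[X]) ≠ 0 := Polynomial.X_ne_zero
      apply mul_left_cancel₀ hX
      have e1 : (X:(ZMod p)[X])^k = X * X^(k-1) := by
        rw [← pow_succ']
        congr 1
        omega
      have e2 : (X:(ZMod p)[X])^(j+1) = X * X^j := by ring
      rw [e1, e2] at hh
      linear_combination hh
    refine ⟨AdjoinRoot.mk _ g + r^(k-1-j) * AdjoinRoot.mk _ h, ?_⟩
    have h3 : AdjoinRoot.mk (X^k : (ZMod p)[X]) f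
        = r^j * AdjoinRoot.mk _ g + r^(k-1) * AdjoinRoot.mk _ h := by
      rw [h2, map_add, map_mul, map_mul, map_pow, map_pow, AdjoinRoot.mk_X, ← hr]
    rw [h3]
    have e3 : r^(k-1) = r^j * r^(k-1-j) := by
      rw [← pow_add]
      congr 1
      omega
    rw [e3]
    ring
  · rintro ⟨y, hy⟩
    exact ⟨y, by rw [hy]; ring⟩

lemma ra_p_eq_zero : ((p : ℕ) : AdjoinRoot (X ^ k : (ZMod p)[X])) = 0 := by
  have h1 : ((p : ℕ) : (ZMod p)[X]) = 0 := by
    rw [← map_natCast (Polynomial.C : (ZMod p) →+* (ZMod p)[X]), ZMod.natCast_self, map_zero]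
  have h2 := map_natCast (AdjoinRoot.mk (X^k : (ZMod p)[X])) p
  rw [h1, map_zero] at h2
  exact h2.symm

lemma ra_one_add_root_pow (hk1 : 1 ≤ k) (hkp : k ≤ p - 1) :
    (1 + AdjoinRoot.root (X^k : (ZMod p)[X]))^p = 1 := by
  set r := AdjoinRoot.root (X ^ k : (ZMod p)[X]) with hr
  have hp2 : 2 ≤ p := (Fact.out : p.Prime).two_le
  have h := add_pow r 1 p
  rw [Finset.sum_range_succ'] at h
  simp only [one_pow, mul_one, pow_zero, Nat.choose_zero_right, Nat.cast_one, one_mul] at h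
  have hz : ∀ x ∈ Finset.range p, r^(x+1) * ((p.choose (x+1) : ℕ) : AdjoinRoot (X^k : (ZMod p)[X])) = 0 := by
    intro x hx
    rcases le_or_gt k (x+1) with h1 | h1
    · have : r^(x+1) = 0 := by
        rw [show x+1 = k + (x+1-k) by omega, pow_add, ra_root_pow, zero_mul]
      rw [this, zero_mul]
    · have hd : p ∣ p.choose (x+1) := (Fact.out : p.Prime).dvd_choose_self (by omega) (by omega)
      obtain ⟨m, hm⟩ := hd
      have : ((p.choose (x+1) : ℕ) : AdjoinRoot (X^k : (ZMod p)[X])) = 0 := by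
        rw [hm, Nat.cast_mul, ra_p_eq_zero, zero_mul]
      rw [this, mul_zero]
  rw [add_comm 1 r, h, Finset.sum_eq_zero hz, zero_add]

lemma ra_finite (hk : 1 ≤ k) : Finite (AdjoinRoot (X ^ k : (ZMod p)[X])) := by
  have hf : (X^k : (ZMod p)[X]) ≠ 0 := pow_ne_zero _ Polynomial.X_ne_zero
  haveI := (AdjoinRoot.powerBasis hf).finite
  exact Module.finite_of_finite (ZMod p)

end Afacts
lemma ucs_prod {G H : Type} [Group G] [Group H] (n : ℕ) (x : G × H) :
    x ∈ Subgroup.upperCentralSeries (G × H) n ↔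
      x.1 ∈ Subgroup.upperCentralSeries G n ∧ x.2 ∈ Subgroup.upperCentralSeries H n := by
  induction n generalizing x with
  | zero =>
      simp only [upperCentralSeries_zero, Subgroup.mem_bot, Prod.ext_iff]
      rfl
  | succ n ih =>
      rw [mem_upperCentralSeries_succ_iff, mem_upperCentralSeries_succ_iff,
        mem_upperCentralSeries_succ_iff]
      constructor
      · intro hxy
        constructor
        · intro y1
          have := (ih _).1 (hxy (y1, 1))
          simpa [commutatorElement_def] using this.1
        · intro y2
          have := (ih _).1 (hxy (1, y2))
          simpa [commutatorElement_def] using this.2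
      · intro ⟨h1, h2⟩ y
        rw [ih]
        exact ⟨h1 y.1, h2 y.2⟩

lemma gr_finite {R : Type} {q : ℕ} [CommRing R] [NeZero q] [Finite R] : Finite (Gr R q) :=
  Finite.of_equiv (R × ZMod q)
    ⟨fun x => ⟨x.1, x.2⟩, fun x => (x.a, x.b), fun _ => rfl, fun _ => rfl⟩

section
open Polynomial

/-- For a prime `p` and `1 ≤ k ≤ p - 1`, `c ≥ k`, there is a finite `p`-group of
nilpotency class `c` (expressed via the upper central series: `Z_c(G) = ⊤` but
`Z_{c-1}(G) ≠ ⊤`) whose spectrum is exactly `{1, …, k}`. -/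
theorem stmt_4 (p k c : ℕ) (hp : p.Prime) (hk1 : 1 ≤ k) (hkp : k ≤ p - 1) (hck : k ≤ c) :
    ∃ (G : Type) (_ : Group G) (_ : Finite G), IsPGroup p G ∧
      upperCentralSeries G c = ⊤ ∧ upperCentralSeries G (c - 1) ≠ ⊤ ∧
      ∀ i : ℕ, 1 ≤ i →
        ((∃ x : G, orderOf x = p ∧ x ∈ upperCentralSeries G i ∧
            x ∉ upperCentralSeries G (i - 1)) ↔ i ≤ k) := by
  classical
  delta upperCentralSeries
  haveI hpf : Fact p.Prime := ⟨hp⟩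
  have hp2 : 2 ≤ p := hp.two_le
  have hc1 : 1 ≤ c := le_trans hk1 hck
  haveI : NeZero (p ^ c) := ⟨pow_ne_zero _ hp.pos.ne'⟩
  haveI : NeZero p := ⟨hp.pos.ne'⟩
  ---- data for the group B
  haveI ntB : Nontrivial (ZMod (p ^ c)) := by
    refine ⟨1, 0, fun h01 => ?_⟩
    haveI : Fact (1 < p ^ c) := ⟨Nat.one_lt_pow (by omega) hp.one_lt⟩
    have := congrArg ZMod.val h01
    rw [ZMod.val_one, ZMod.val_zero] at this
    omega
  have hcop : Nat.Coprime (1 + p) (p ^ c) := by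
    apply Nat.Coprime.pow_right
    rw [Nat.coprime_add_self_left]
    exact Nat.coprime_one_left p
  set uB : (ZMod (p ^ c))ˣ := ZMod.unitOfCoprime (1 + p) hcop with huBdef
  have hUB : (uB : ZMod (p ^ c)) = 1 + (p : ZMod (p ^ c)) := by
    rw [huBdef, ZMod.coe_unitOfCoprime]
    push_cast
    ring
  have huBpow : ∀ j : ℕ, c ≤ j + 1 → uB ^ (p ^ j) = 1 := by
    intro j hj
    apply Units.ext
    rw [Units.val_pow_eq_pow_val, hUB, Units.val_one]
    exact zmod_one_add_p_pow_eq_one hp2 j hj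
  letI dataB : GrData (ZMod (p ^ c)) (p ^ c) := ⟨uB, huBpow c (by omega)⟩
  have keyB : ∀ j (w : ZMod (p^c)), j + 1 ≤ c →
      ((p : ZMod (p^c)) ^ (j+1) ∣ (p : ZMod (p^c)) * w ↔ (p : ZMod (p^c)) ^ j ∣ w) :=
    fun j w hj => zmod_key hp j w hj
  have hπnB := zmod_pi_pow_eq_zero p c
  have hqB : 1 < p ^ c := Nat.one_lt_pow (by omega) hp.one_lt
  ---- data for the group A
  haveI ntA : Nontrivial (AdjoinRoot (X ^ k : (ZMod p)[X])) := ra_nontrivial hk1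
  haveI finA : Finite (AdjoinRoot (X ^ k : (ZMod p)[X])) := ra_finite hk1
  set r : AdjoinRoot (X ^ k : (ZMod p)[X]) := AdjoinRoot.root _ with hrdef
  have hrk : r ^ k = 0 := ra_root_pow
  have hgeo : (∑ i ∈ Finset.range k, (-r) ^ i) * (1 + r) = 1 := by
    have hg := geom_sum_mul (-r) k
    have h0 : (-r) ^ k = 0 := by
      rw [neg_pow, hrk, mul_zero]
    rw [h0, zero_sub] at hg
    linear_combination -hg
  set uA : (AdjoinRoot (X ^ k : (ZMod p)[X]))ˣ :=
    ⟨1 + r, ∑ i ∈ Finset.range k, (-r) ^ i, by rw [mul_comm]; exact hgeo, hgeo⟩ with huAdef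
  have huA : uA ^ p = 1 := by
    apply Units.ext
    rw [Units.val_pow_eq_pow_val]
    exact ra_one_add_root_pow hk1 hkp
  letI dataA : GrData (AdjoinRoot (X ^ k : (ZMod p)[X])) p := ⟨uA, huA⟩
  have hUA : (uA : AdjoinRoot (X ^ k : (ZMod p)[X])) = 1 + r := rfl
  have keyA : ∀ j (w : AdjoinRoot (X ^ k : (ZMod p)[X])), j + 1 ≤ k →
      (r ^ (j+1) ∣ r * w ↔ r ^ j ∣ w) :=
    fun j w hj => ra_key j w hj
  have hqA : 1 < p := hp.one_lt
  ---- the group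
  refine ⟨Gr (AdjoinRoot (X ^ k : (ZMod p)[X])) p × Gr (ZMod (p ^ c)) (p ^ c),
    inferInstance, ?_, ?_, ?_, ?_, ?_⟩
  · haveI h1 : Finite (Gr (AdjoinRoot (X ^ k : (ZMod p)[X])) p) := gr_finite
    haveI h2 : Finite (Gr (ZMod (p ^ c)) (p ^ c)) := gr_finite
    exact inferInstance
  ---- p-group
  · intro g
    refine ⟨2*c + 2, ?_⟩
    have h1 : g.1 ^ (p ^ (2*c+2)) = 1 := by
      have hexp : g.1 ^ (p * p) = 1 := Gr.pow_q_mul_eq_one ra_p_eq_zero g.1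
      have he : p ^ (2*c+2) = (p * p) * p ^ (2*c) := by ring
      rw [he, pow_mul, hexp, one_pow]
    have h2 : g.2 ^ (p ^ (2*c+2)) = 1 := by
      have hm : ((p^c : ℕ) : ZMod (p^c)) = 0 := ZMod.natCast_self _
      have hexp : g.2 ^ (p^c * p^c) = 1 := Gr.pow_q_mul_eq_one hm g.2
      have he : p ^ (2*c+2) = (p^c * p^c) * p ^ 2 := by ring
      rw [he, pow_mul, hexp, one_pow]
    exact Prod.ext h1 h2
  ---- Z_c = ⊤
  · have hA : Subgroup.upperCentralSeries (Gr (AdjoinRoot (X ^ k : (ZMod p)[X])) p) k = ⊤ :=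
      Gr.ucs_top keyA hrk hUA hqA hk1
    have hB : Subgroup.upperCentralSeries (Gr (ZMod (p ^ c)) (p ^ c)) c = ⊤ :=
      Gr.ucs_top keyB hπnB hUB hqB hc1
    rw [eq_top_iff]
    intro x _
    rw [ucs_prod]
    constructor
    · apply upperCentralSeries_mono _ hck
      rw [hA]
      trivial
    · rw [hB]
      trivial
  ---- Z_{c-1} ≠ ⊤
  · intro htop
    have hmem : ((1 : Gr (AdjoinRoot (X ^ k : (ZMod p)[X])) p), (⟨1, 0⟩ : Gr (ZMod (p ^ c)) (p ^ c)))
        ∈ Subgroup.upperCentralSeries _ (c-1) := by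
      rw [htop]; trivial
    rw [ucs_prod] at hmem
    have hB := hmem.2
    rcases Nat.eq_or_lt_of_le hc1 with hc1' | hc2
    · -- c = 1
      rw [show c - 1 = 0 by omega, upperCentralSeries_zero, Subgroup.mem_bot,
        Gr.eq_one_iff] at hB
      exact one_ne_zero hB.1
    · -- c ≥ 2
      rw [Gr.mem_ucs_iff keyB hπnB hUB hqB (c-1) 1 (by omega) (by omega)] at hB
      have hdvd : (p : ZMod (p^c)) ^ 1 ∣ (p : ZMod (p^c)) ^ 0 := by
        simpa using hB.1
      exact Gr.not_pow_dvd keyB hπnB hUB hqB 0 (by omega) hdvd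
  ---- spectrum
  · intro i hi1
    constructor
    · -- existence of order-p element at level i implies i ≤ k
      rintro ⟨x, hord, hmemi, hnot⟩
      by_contra hik
      push_neg at hik
      apply hnot
      rw [ucs_prod]
      constructor
      · -- first component
        have hA : Subgroup.upperCentralSeries (Gr (AdjoinRoot (X ^ k : (ZMod p)[X])) p) k = ⊤ :=
          Gr.ucs_top keyA hrk hUA hqA hk1
        apply upperCentralSeries_mono _ (show k ≤ i - 1 by omega)
        rw [hA]
        trivial
      · -- second component is of order dividing p, hence central
        have hxp : x ^ p = 1 := by
          have h := pow_orderOf_eq_one x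
          rwa [hord] at h
        have hx2 : x.2 ^ p = 1 := congrArg Prod.snd hxp
        -- show x.2 ∈ Z_1
        have hcentral : x.2 ∈ Subgroup.upperCentralSeries (Gr (ZMod (p ^ c)) (p ^ c)) 1 := by
          rw [Gr.pow_eq, Gr.eq_one_iff] at hx2
          dsimp only at hx2
          obtain ⟨hx2a, hx2b⟩ := hx2
          -- from p • b = 0 : p^{c-1} | b
          have hb0 : (p : ZMod (p^c)) * x.2.b = 0 := by
            rw [← nsmul_eq_mul]
            exact_mod_cast hx2b
          have hbdvd : (p : ZMod (p^c)) ^ (c-1) ∣ x.2.b := by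
            apply (keyB (c-1) x.2.b (by omega)).1
            rw [hb0]
            exact dvd_zero _
          have hbval : p ^ (c-1) ∣ (x.2.b).val := zmod_val_dvd hp (c-1) (by omega) _ hbdvd
          have heb : Gr.e (R := ZMod (p^c)) x.2.b = 1 := by
            obtain ⟨m, hm⟩ := hbval
            show (GrData.u (R := ZMod (p^c)) (q := p^c)) ^ (x.2.b).val = 1
            rw [hm, pow_mul]
            have : (GrData.u (R := ZMod (p^c)) (q := p^c)) ^ (p ^ (c-1)) = 1 :=
              huBpow (c-1) (by omega)
            rw [this, one_pow]
          -- now the first component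
          have hsum : (∑ j ∈ Finset.range p, ((Gr.e (R := ZMod (p^c)) x.2.b).val) ^ j)
              = (p : ZMod (p^c)) := by
            rw [heb]
            simp
          rw [hsum] at hx2a
          have hadvd : (p : ZMod (p^c)) ^ (c-1) ∣ x.2.a := by
            apply (keyB (c-1) x.2.a (by omega)).1
            rw [show (c-1) + 1 = c by omega, hx2a]
            exact dvd_zero _
          rw [Gr.mem_ucs_iff keyB hπnB hUB hqB 1 (c-1) le_rfl (by omega)]
          refine ⟨hadvd, ?_⟩
          rw [heb, Units.val_one, sub_self]
          exact dvd_zero _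
        exact upperCentralSeries_mono _ (show 1 ≤ i - 1 by omega) hcentral
    · -- i ≤ k implies existence
      intro hik
      refine ⟨((⟨r ^ (k - i), 0⟩ : Gr (AdjoinRoot (X ^ k : (ZMod p)[X])) p), 1), ?_, ?_, ?_⟩
      · -- order p
        apply orderOf_eq_prime
        · have e1 : (⟨r ^ (k-i), 0⟩ : Gr (AdjoinRoot (X ^ k : (ZMod p)[X])) p) ^ p = 1 := by
            rw [Gr.pow_eq, Gr.eq_one_iff]
            constructor
            · simp only [Gr.e_zero, Units.val_one, one_pow, Finset.sum_const,
                Finset.card_range, nsmul_eq_mul, mul_one, ra_p_eq_zero, zero_mul]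
            · simp
          exact Prod.ext e1 (one_pow p)
        · intro h1
          have e1 : (⟨r ^ (k-i), 0⟩ : Gr (AdjoinRoot (X ^ k : (ZMod p)[X])) p) = 1 :=
            congrArg Prod.fst h1
          rw [Gr.eq_one_iff] at e1
          have hr0 : r ^ (k - i) = 0 := e1.1
          apply Gr.not_pow_dvd keyA hrk hUA hqA (k - i) (by omega)
          rw [hr0]
          exact dvd_zero _
      · rw [ucs_prod]
        constructor
        · rw [Gr.mem_ucs_iff keyA hrk hUA hqA i (k - i) hi1 (by omega)]
          refine ⟨dvd_rfl, ?_⟩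
          rw [Gr.e_zero, Units.val_one, sub_self]
          exact dvd_zero _
        · exact Subgroup.one_mem _
      · intro hmem
        rw [ucs_prod] at hmem
        have hA := hmem.1
        rcases Nat.eq_or_lt_of_le hi1 with hi1' | hi2
        · rw [show i - 1 = 0 by omega, upperCentralSeries_zero, Subgroup.mem_bot,
            Gr.eq_one_iff] at hA
          have hr0 : r ^ (k - i) = 0 := hA.1
          apply Gr.not_pow_dvd keyA hrk hUA hqA (k - i) (by omega)
          rw [hr0]
          exact dvd_zero _
        · rw [Gr.mem_ucs_iff keyA hrk hUA hqA (i-1) (k-i+1) (by omega) (by omega)] at hA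
          have hdvd := hA.1
          exact Gr.not_pow_dvd keyA hrk hUA hqA (k - i) (by omega)
            (by rw [show k - i + 1 = (k-i) + 1 by omega] at hdvd; exact hdvd)

end
end

section
/- Let p be a prime and let G₁ and G₂ be nontrivial finite p-groups. Then for every i ≥ 1, the direct product G₁ × G₂ has an element of order p in Z_i(G₁ × G₂) \ Z_{i-1}(G₁ × G₂) if and only if G₁ has an element of order p in Z_i(G₁) \ Z_{i-1}(G₁) or G₂ has an element of order p in Z_i(G₂) \ Z_{i-1}(G₂). In other words, the spectrum of G₁ × G₂ is the union of the spectra of G₁ and G₂. -/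
theorem ucs_prod_s12 (G₁ G₂ : Type*) [Group G₁] [Group G₂] :
    ∀ n : ℕ, upperCentralSeries (G₁ × G₂) n =
      (upperCentralSeries G₁ n).prod (upperCentralSeries G₂ n)
  | 0 => by simp [upperCentralSeries, upperCentralSeries_zero, Subgroup.bot_prod_bot]
  | n + 1 => by
    have ih := ucs_prod_s12 G₁ G₂ n
    unfold upperCentralSeries at ih ⊢
    ext x
    simp only [mem_upperCentralSeries_succ_iff, ih, Subgroup.mem_prod]
    constructor
    · intro h
      refine ⟨fun y => ?_, fun y => ?_⟩
      · simpa [commutatorElement_def] using (h (y, 1)).1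
      · simpa [commutatorElement_def] using (h (1, y)).2
    · rintro ⟨h1, h2⟩ y
      exact ⟨h1 y.1, h2 y.2⟩

/-- Let `p` be a prime and `G₁`, `G₂` nontrivial finite `p`-groups. For every `i ≥ 1`,
`G₁ × G₂` has an element of order `p` in `Z_i \ Z_{i-1}` iff `G₁` or `G₂` does:
the spectrum of the direct product is the union of the spectra. -/
theorem stmt_12 (p : ℕ) (hp : p.Prime)
    (G₁ G₂ : Type*) [Group G₁] [Group G₂] [Finite G₁] [Finite G₂]
    [Nontrivial G₁] [Nontrivial G₂]
    (hpG₁ : IsPGroup p G₁) (hpG₂ : IsPGroup p G₂) :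
    ∀ i : ℕ, 1 ≤ i →
      ((∃ x : G₁ × G₂, orderOf x = p ∧ x ∈ upperCentralSeries (G₁ × G₂) i ∧
          x ∉ upperCentralSeries (G₁ × G₂) (i - 1)) ↔
        ((∃ x : G₁, orderOf x = p ∧ x ∈ upperCentralSeries G₁ i ∧
            x ∉ upperCentralSeries G₁ (i - 1)) ∨
          (∃ x : G₂, orderOf x = p ∧ x ∈ upperCentralSeries G₂ i ∧
            x ∉ upperCentralSeries G₂ (i - 1)))) := by
  intro i _
  constructor
  · rintro ⟨⟨x₁, x₂⟩, hord, hmem, hnmem⟩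
    rw [ucs_prod_s12, Subgroup.mem_prod] at hmem hnmem
    rw [Prod.orderOf] at hord
    push_neg at hnmem
    rcases Classical.em (x₁ ∈ upperCentralSeries G₁ (i - 1)) with h1 | h1
    · right
      have h2 := hnmem h1
      have hx2 : x₂ ≠ 1 := fun h => h2 (h ▸ (upperCentralSeries G₂ (i - 1)).one_mem)
      have hdvd : orderOf x₂ ∣ p := hord ▸ Nat.dvd_lcm_right _ _
      have : orderOf x₂ = p := by
        rcases (Nat.dvd_prime hp).1 hdvd with h | h
        · exact absurd (orderOf_eq_one_iff.1 h) hx2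
        · exact h
      exact ⟨x₂, this, hmem.2, h2⟩
    · left
      have hx1 : x₁ ≠ 1 := fun h => h1 (h ▸ (upperCentralSeries G₁ (i - 1)).one_mem)
      have hdvd : orderOf x₁ ∣ p := hord ▸ Nat.dvd_lcm_left _ _
      have : orderOf x₁ = p := by
        rcases (Nat.dvd_prime hp).1 hdvd with h | h
        · exact absurd (orderOf_eq_one_iff.1 h) hx1
        · exact h
      exact ⟨x₁, this, hmem.1, h1⟩
  · rintro (⟨x, hord, hmem, hnmem⟩ | ⟨x, hord, hmem, hnmem⟩)
    · refine ⟨(x, 1), ?_, ?_, ?_⟩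
      · rw [Prod.orderOf]; simp [hord]
      · rw [ucs_prod_s12, Subgroup.mem_prod]
        exact ⟨hmem, (upperCentralSeries G₂ i).one_mem⟩
      · rw [ucs_prod_s12, Subgroup.mem_prod]
        exact fun h => hnmem h.1
    · refine ⟨(1, x), ?_, ?_, ?_⟩
      · rw [Prod.orderOf]; simp [hord]
      · rw [ucs_prod_s12, Subgroup.mem_prod]
        exact ⟨(upperCentralSeries G₁ i).one_mem, hmem⟩
      · rw [ucs_prod_s12, Subgroup.mem_prod]
        exact fun h => hnmem h.2
end

section
/- Let p be a prime, let G₁ and G₂ be nontrivial finite p-groups, and let z₁ ∈ Z(G₁) and z₂ ∈ Z(G₂) be central elements each of order p. Let G = G₁ × G₂ and suppose that (z₁, z₂) is not a p-th power in G, i.e. there is no g ∈ G with g^p = (z₁, z₂). Let Q = G/N where N is the subgroup generated by (z₁, z₂). Then Q has the same nilpotency class as G, and Q has the same spectrum as G: for every i ≥ 1, Q has an element of order p in Z_i(Q) \ Z_{i-1}(Q) if and only if G has an element of order p in Z_i(G) \ Z_{i-1}(G). -/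
open QuotientGroup

/-- Any nontrivial finite p-group has a central element of order p. -/
lemma aux_spec_one (p : ℕ) (hp : p.Prime) (H : Type*) [Group H] [Finite H] [Nontrivial H]
    (h : IsPGroup p H) :
    ∃ x : H, orderOf x = p ∧ x ∈ Subgroup.upperCentralSeries H 1 ∧ x ∉ Subgroup.upperCentralSeries H 0 := by
  haveI : Fact p.Prime := ⟨hp⟩
  haveI := h.center_nontrivial
  have hc : IsPGroup p (Subgroup.center H) := h.to_subgroup _
  obtain ⟨n, hn⟩ := IsPGroup.iff_card.mp hc
  have hn1 : n ≠ 0 := by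
    rintro rfl
    have h1 : 1 < Nat.card (Subgroup.center H) := Finite.one_lt_card
    rw [hn, pow_zero] at h1
    exact absurd h1 (lt_irrefl 1)
  have hdvd : p ∣ Nat.card (Subgroup.center H) := hn ▸ dvd_pow_self p hn1
  obtain ⟨x, hx⟩ := exists_prime_orderOf_dvd_card' p hdvd
  refine ⟨(x : H), by rw [Subgroup.orderOf_coe, hx], ?_, ?_⟩
  · rw [upperCentralSeries_one]; exact x.2
  · rw [upperCentralSeries_zero, Subgroup.mem_bot]
    intro hx1
    have : orderOf (x : H) = 1 := by rw [hx1, orderOf_one]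
    rw [Subgroup.orderOf_coe, hx] at this
    exact hp.ne_one this

/-- Let `p` be a prime, `G₁`, `G₂` nontrivial finite `p`-groups, `z₁ ∈ Z(G₁)`,
`z₂ ∈ Z(G₂)` central of order `p`, `G = G₁ × G₂`, and suppose `(z₁, z₂)` is not a `p`-th
power in `G`. Let `Q = G / ⟨(z₁, z₂)⟩`. Then `Q` and `G` have the same nilpotency class
(expressed via the upper central series reaching the top) and the same spectrum. -/
theorem stmt_14 (p : ℕ) (hp : p.Prime)
    (G₁ G₂ : Type*) [Group G₁] [Group G₂] [Finite G₁] [Finite G₂]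
    [Nontrivial G₁] [Nontrivial G₂]
    (hpG₁ : IsPGroup p G₁) (hpG₂ : IsPGroup p G₂)
    (z₁ : G₁) (z₂ : G₂)
    (hz₁ : z₁ ∈ Subgroup.center G₁) (hz₂ : z₂ ∈ Subgroup.center G₂)
    (ho₁ : orderOf z₁ = p) (ho₂ : orderOf z₂ = p)
    (hpow : ¬ ∃ g : G₁ × G₂, g ^ p = ((z₁, z₂) : G₁ × G₂))
    [hN : (Subgroup.zpowers ((z₁, z₂) : G₁ × G₂)).Normal] :
    (∀ c : ℕ,
        upperCentralSeries ((G₁ × G₂) ⧸ Subgroup.zpowers ((z₁, z₂) : G₁ × G₂)) c = ⊤ ↔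
          upperCentralSeries (G₁ × G₂) c = ⊤) ∧
      ∀ i : ℕ, 1 ≤ i →
        ((∃ x : (G₁ × G₂) ⧸ Subgroup.zpowers ((z₁, z₂) : G₁ × G₂), orderOf x = p ∧
            x ∈ upperCentralSeries ((G₁ × G₂) ⧸ Subgroup.zpowers ((z₁, z₂) : G₁ × G₂)) i ∧
            x ∉ upperCentralSeries ((G₁ × G₂) ⧸ Subgroup.zpowers ((z₁, z₂) : G₁ × G₂)) (i - 1)) ↔
          (∃ x : G₁ × G₂, orderOf x = p ∧ x ∈ upperCentralSeries (G₁ × G₂) i ∧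
            x ∉ upperCentralSeries (G₁ × G₂) (i - 1))) := by
  simp only [upperCentralSeries]
  haveI : Fact p.Prime := ⟨hp⟩
  set z : G₁ × G₂ := (z₁, z₂) with hzdef
  set N : Subgroup (G₁ × G₂) := Subgroup.zpowers z with hNdef
  -- basic facts about z
  have hz1p : z₁ ^ p = 1 := by rw [← ho₁]; exact pow_orderOf_eq_one z₁
  have hz2p : z₂ ^ p = 1 := by rw [← ho₂]; exact pow_orderOf_eq_one z₂
  have hzp : z ^ p = 1 := Prod.ext (by simpa using hz1p) (by simpa using hz2p)
  have hz1ne : z₁ ≠ 1 := by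
    intro h
    rw [h, orderOf_one] at ho₁
    exact hp.ne_one ho₁.symm
  have hzne : z ≠ 1 := by
    intro h
    exact hz1ne (congrArg Prod.fst h)
  have hoz : orderOf z = p := orderOf_eq_prime hzp hzne
  -- if z₂ ^ k = 1 (k : ℤ) then z ^ k = 1, and similarly for z₁
  have hk2 : ∀ k : ℤ, z₂ ^ k = 1 → z ^ k = 1 := by
    intro k hk
    rw [← orderOf_dvd_iff_zpow_eq_one] at hk ⊢
    rw [hoz]; rwa [ho₂] at hk
  have hk1 : ∀ k : ℤ, z₁ ^ k = 1 → z ^ k = 1 := by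
    intro k hk
    rw [← orderOf_dvd_iff_zpow_eq_one] at hk ⊢
    rw [hoz]; rwa [ho₁] at hk
  -- elements of N with trivial second component are trivial, etc.
  have hmemN1 : ∀ a : G₁, ((a, (1 : G₂)) : G₁ × G₂) ∈ N → a = 1 := by
    intro a ha
    obtain ⟨k, hk⟩ := Subgroup.mem_zpowers_iff.mp ha
    have h2 : z₂ ^ k = 1 := by
      have := congrArg Prod.snd hk
      simpa [map_zpow] using (map_zpow (MonoidHom.snd G₁ G₂) z k).symm.trans this
    have hz1 : z ^ k = 1 := hk2 k h2
    rw [hz1] at hk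
    exact (congrArg Prod.fst hk).symm
  have hmemN2 : ∀ b : G₂, (((1 : G₁), b) : G₁ × G₂) ∈ N → b = 1 := by
    intro b hb
    obtain ⟨k, hk⟩ := Subgroup.mem_zpowers_iff.mp hb
    have h1 : z₁ ^ k = 1 := by
      have := congrArg Prod.fst hk
      simpa [map_zpow] using (map_zpow (MonoidHom.fst G₁ G₂) z k).symm.trans this
    have hz1 : z ^ k = 1 := hk1 k h1
    rw [hz1] at hk
    exact (congrArg Prod.snd hk).symm
  -- z is central, so N ≤ center
  have hzc : z ∈ Subgroup.center (G₁ × G₂) := by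
    rw [Subgroup.mem_center_iff]
    intro g
    exact Prod.ext (Subgroup.mem_center_iff.mp hz₁ g.1) (Subgroup.mem_center_iff.mp hz₂ g.2)
  have hNle : N ≤ Subgroup.center (G₁ × G₂) := Subgroup.zpowers_le.mpr hzc
  -- the quotient map
  set π : (G₁ × G₂) →* (G₁ × G₂) ⧸ N := QuotientGroup.mk' N with hπdef
  have hπsurj : Function.Surjective π := QuotientGroup.mk'_surjective N
  -- key: the preimage of the (n+1)-st upper central term of the quotient is
  -- the (n+1)-st upper central term of G
  have hcomap : ∀ n : ℕ,
      Subgroup.comap π (Subgroup.upperCentralSeries ((G₁ × G₂) ⧸ N) (n + 1)) =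
        Subgroup.upperCentralSeries (G₁ × G₂) (n + 1) := by
    intro n
    induction n with
    | zero =>
      ext g
      rw [Subgroup.mem_comap, mem_upperCentralSeries_succ_iff, upperCentralSeries_one]
      constructor
      · intro h
        rw [Subgroup.mem_center_iff]
        intro w
        have hcomm : ∀ v : G₁ × G₂, g * v * g⁻¹ * v⁻¹ ∈ N := by
          intro v
          have := h (π v)
          rw [upperCentralSeries_zero, Subgroup.mem_bot] at this
          have heq : π (g * v * g⁻¹ * v⁻¹) = 1 := by
            simpa [map_mul, map_inv, commutatorElement_def] using this
          rwa [← QuotientGroup.ker_mk' N, MonoidHom.mem_ker]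
        have h1 : g.1 * w.1 * g.1⁻¹ * w.1⁻¹ = 1 := by
          have := hcomm (w.1, 1)
          have heq : g * (w.1, (1:G₂)) * g⁻¹ * ((w.1, (1:G₂)))⁻¹ =
              ((g.1 * w.1 * g.1⁻¹ * w.1⁻¹, (1 : G₂)) : G₁ × G₂) := by
            ext <;> simp
          rw [heq] at this
          exact hmemN1 _ this
        have h2 : g.2 * w.2 * g.2⁻¹ * w.2⁻¹ = 1 := by
          have := hcomm ((1:G₁), w.2)
          have heq : g * ((1:G₁), w.2) * g⁻¹ * (((1:G₁), w.2))⁻¹ =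
              (((1 : G₁), g.2 * w.2 * g.2⁻¹ * w.2⁻¹) : G₁ × G₂) := by
            ext <;> simp
          rw [heq] at this
          exact hmemN2 _ this
        have h1' : g.1 * w.1 = w.1 * g.1 := by
          have := mul_eq_one_iff_eq_inv.mp ((by group : (g.1 * w.1) * (w.1 * g.1)⁻¹ =
            g.1 * w.1 * g.1⁻¹ * w.1⁻¹) ▸ h1)
          simpa using this
        have h2' : g.2 * w.2 = w.2 * g.2 := by
          have := mul_eq_one_iff_eq_inv.mp ((by group : (g.2 * w.2) * (w.2 * g.2)⁻¹ =
            g.2 * w.2 * g.2⁻¹ * w.2⁻¹) ▸ h2)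
          simpa using this
        exact Prod.ext (by simpa using h1'.symm) (by simpa using h2'.symm)
      · intro hg y
        obtain ⟨w, rfl⟩ := hπsurj y
        have : g * w = w * g := (Subgroup.mem_center_iff.mp hg w).symm
        have hcomm : g * w * g⁻¹ * w⁻¹ = 1 := by
          rw [this]; group
        rw [upperCentralSeries_zero, Subgroup.mem_bot]
        calc π g * π w * (π g)⁻¹ * (π w)⁻¹ = π (g * w * g⁻¹ * w⁻¹) := by
              simp [map_mul, map_inv]
          _ = 1 := by rw [hcomm, map_one]
    | succ n ih =>
      ext g
      rw [Subgroup.mem_comap, mem_upperCentralSeries_succ_iff,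
        mem_upperCentralSeries_succ_iff]
      constructor
      · intro h w
        rw [← ih, Subgroup.mem_comap]
        have := h (π w)
        simpa [map_mul, map_inv] using this
      · intro h y
        obtain ⟨w, rfl⟩ := hπsurj y
        have := h w
        rw [← ih, Subgroup.mem_comap] at this
        simpa [map_mul, map_inv] using this
  -- nontriviality of the quotient
  obtain ⟨a, ha⟩ := exists_ne (1 : G₁)
  have hπa : π ((a, 1) : G₁ × G₂) ≠ 1 := by
    intro h
    rw [← MonoidHom.mem_ker, QuotientGroup.ker_mk'] at h
    exact ha (hmemN1 a h)
  haveI hQnt : Nontrivial ((G₁ × G₂) ⧸ N) := ⟨_, _, hπa⟩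
  -- p-group structure
  have hpG : IsPGroup p (G₁ × G₂) := by
    intro g
    obtain ⟨k₁, h₁⟩ := hpG₁ g.1
    obtain ⟨k₂, h₂⟩ := hpG₂ g.2
    refine ⟨k₁ + k₂, Prod.ext ?_ ?_⟩
    · show g.1 ^ p ^ (k₁ + k₂) = 1
      rw [pow_add, pow_mul, h₁, one_pow]
    · show g.2 ^ p ^ (k₁ + k₂) = 1
      rw [pow_add, mul_comm, pow_mul, h₂, one_pow]
  have hpQ : IsPGroup p ((G₁ × G₂) ⧸ N) := hpG.to_quotient N
  constructor
  · -- same nilpotency class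
    intro c
    match c with
    | 0 =>
      constructor
      · intro h
        exfalso
        obtain ⟨x, y, hxy⟩ := hQnt
        rw [upperCentralSeries_zero] at h
        have hx : x ∈ (⊥ : Subgroup ((G₁ × G₂) ⧸ N)) := h ▸ Subgroup.mem_top x
        have hy : y ∈ (⊥ : Subgroup ((G₁ × G₂) ⧸ N)) := h ▸ Subgroup.mem_top y
        rw [Subgroup.mem_bot] at hx hy
        exact hxy (hx.trans hy.symm)
      · intro h
        exfalso
        have hx : z ∈ (⊥ : Subgroup (G₁ × G₂)) := by
          rw [← upperCentralSeries_zero, h]; exact Subgroup.mem_top z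
        exact hzne (Subgroup.mem_bot.mp hx)
    | (n + 1) =>
      constructor
      · intro h
        rw [← hcomap n, h, Subgroup.comap_top]
      · intro h
        have : Subgroup.comap π (Subgroup.upperCentralSeries ((G₁ × G₂) ⧸ N) (n + 1)) =
            Subgroup.comap π ⊤ := by
          rw [hcomap n, h, Subgroup.comap_top]
        exact Subgroup.comap_injective hπsurj this
  · -- same spectrum
    intro i hi
    match i, hi with
    | 1, _ =>
      simp only [Nat.sub_self]
      constructor
      · intro _
        exact aux_spec_one p hp (G₁ × G₂) hpG
      · intro _
        exact aux_spec_one p hp ((G₁ × G₂) ⧸ N) hpQ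
    | (n + 2), _ =>
      have hsub : n + 2 - 1 = n + 1 := rfl
      rw [hsub]
      constructor
      · rintro ⟨y, hyo, hym, hyn⟩
        obtain ⟨x, rfl⟩ := hπsurj y
        have hxm : x ∈ Subgroup.upperCentralSeries (G₁ × G₂) (n + 2) := by
          rw [← hcomap (n + 1)]; exact hym
        have hxn : x ∉ Subgroup.upperCentralSeries (G₁ × G₂) (n + 1) := by
          intro h
          rw [← hcomap n] at h
          exact hyn h
        have hx1 : π x ≠ 1 := by
          intro h
          exact hyn (h ▸ (Subgroup.upperCentralSeries ((G₁ × G₂) ⧸ N) (n + 1)).one_mem)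
        have hxne : x ≠ 1 := fun h => hx1 (by rw [h, map_one])
        have hxpN : x ^ p ∈ N := by
          have : π (x ^ p) = 1 := by
            rw [map_pow, ← hyo]
            exact pow_orderOf_eq_one (π x)
          rwa [← MonoidHom.mem_ker, QuotientGroup.ker_mk'] at this
        obtain ⟨k, hk⟩ := Subgroup.mem_zpowers_iff.mp hxpN
        by_cases hdvd : (p : ℤ) ∣ k
        · -- x ^ p = 1
          have hzk : z ^ k = 1 := by
            rw [← orderOf_dvd_iff_zpow_eq_one, hoz]; exact hdvd
          have hxp : x ^ p = 1 := by rw [← hk, hzk]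
          exact ⟨x, orderOf_eq_prime hxp hxne, hxm, hxn⟩
        · -- contradiction with hpow
          exfalso
          have hcop : IsCoprime (p : ℤ) k :=
            (Nat.prime_iff_prime_int.mp hp).coprime_iff_not_dvd.mpr hdvd
          obtain ⟨u, v, huv⟩ := hcop
          -- u * p + v * k = 1
          refine hpow ⟨x ^ v, ?_⟩
          have hc1 : (x ^ v) ^ p = x ^ (v * (p : ℤ)) := by
            rw [← zpow_natCast (x ^ v) p, ← zpow_mul]
          have hc2 : x ^ (v * (p : ℤ)) = (x ^ (p : ℕ)) ^ v := by
            rw [← zpow_natCast x p, ← zpow_mul, mul_comm]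
          have hc3 : (x ^ (p : ℕ)) ^ v = z ^ (k * v) := by
            rw [← hk, ← zpow_mul]
          have hmod : k * v ≡ 1 [ZMOD (p : ℕ)] := by
            have h1 : (1 : ℤ) - k * v = u * p := by linarith [huv]
            exact Int.modEq_iff_dvd.mpr ⟨u, by rw [h1]; ring⟩
          have hc4 : z ^ (k * v) = z ^ (1 : ℤ) := by
            rw [zpow_eq_zpow_iff_modEq, hoz]
            exact hmod
          rw [hc1, hc2, hc3, hc4, zpow_one]
      · rintro ⟨x, hxo, hxm, hxn⟩
        refine ⟨π x, ?_, ?_, ?_⟩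
        · have hπxp : (π x) ^ p = 1 := by
            rw [← map_pow, ← hxo, pow_orderOf_eq_one, map_one]
          have hπx1 : π x ≠ 1 := by
            intro h
            rw [← MonoidHom.mem_ker, QuotientGroup.ker_mk'] at h
            have : x ∈ Subgroup.upperCentralSeries (G₁ × G₂) (n + 1) := by
              have h1 : x ∈ Subgroup.center (G₁ × G₂) := hNle h
              rw [← upperCentralSeries_one] at h1
              exact upperCentralSeries_mono _ (by omega) h1
            exact hxn this
          exact orderOf_eq_prime hπxp hπx1
        · rw [← hcomap (n + 1)] at hxm
          exact hxm
        · intro h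
          have : x ∈ Subgroup.comap π (Subgroup.upperCentralSeries ((G₁ × G₂) ⧸ N) (n + 1)) := h
          rw [hcomap n] at this
          exact hxn this
end

section
/- Let G be a group, let c ≥ 1, and let 1 = G₀ < G₁ < ⋯ < G_c = G be a central series of G, i.e. the G_i are subgroups, the inclusions G_{i-1} < G_i are strict, and [G_i, G] ≤ G_{i-1} for all 1 ≤ i ≤ c. Then the following are equivalent: (1) for every 2 ≤ m ≤ c and every x ∈ G_m \ G_{m-1}, there exists y ∈ G such that the commutator [x, y] lies in G_{m-1} \ G_{m-2}; (2) the series coincides with the upper central series of G, i.e. G_i = Z_i(G) for all 1 ≤ i ≤ c. -/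
/-- Let `G` be a group, `c ≥ 1`, and `1 = G₀ < G₁ < ⋯ < G_c = G` a central series
(with strict inclusions, and `[G_i, G] ≤ G_{i-1}`). Then the following are equivalent:
(1) for every `2 ≤ m ≤ c` and every `x ∈ G_m \ G_{m-1}` there is `y ∈ G` with
`[x, y] ∈ G_{m-1} \ G_{m-2}`; (2) the series is the upper central series, i.e.
`G_i = Z_i(G)` for `1 ≤ i ≤ c`. -/
theorem stmt_15 (G : Type*) [Group G] (c : ℕ) (hc : 1 ≤ c)
    (Gs : ℕ → Subgroup G) (h0 : Gs 0 = ⊥) (htop : Gs c = ⊤)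
    (hlt : ∀ i : ℕ, 1 ≤ i → i ≤ c → Gs (i - 1) < Gs i)
    (hcentral : ∀ i : ℕ, 1 ≤ i → i ≤ c →
      ∀ x ∈ Gs i, ∀ y : G, x⁻¹ * y⁻¹ * x * y ∈ Gs (i - 1)) :
    (∀ m : ℕ, 2 ≤ m → m ≤ c → ∀ x : G, x ∈ Gs m → x ∉ Gs (m - 1) →
        ∃ y : G, x⁻¹ * y⁻¹ * x * y ∈ Gs (m - 1) ∧ x⁻¹ * y⁻¹ * x * y ∉ Gs (m - 2)) ↔
      (∀ i : ℕ, 1 ≤ i → i ≤ c → Gs i = upperCentralSeries G i) := by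
  classical
  -- monotonicity of the series on [0, c]
  have hmono : ∀ a b : ℕ, a ≤ b → b ≤ c → Gs a ≤ Gs b := by
    intro a b hab hbc
    induction b with
    | zero =>
      have : a = 0 := Nat.le_zero.mp hab
      subst this; exact le_rfl
    | succ n ih =>
      rcases Nat.lt_or_ge a (n + 1) with h | h
      · have h1 : Gs a ≤ Gs n := ih (Nat.lt_succ_iff.mp h) (le_trans (Nat.le_succ n) hbc)
        have h2 : Gs n < Gs (n + 1) := by
          simpa using hlt (n + 1) (Nat.succ_le_succ (Nat.zero_le n)) hbc
        exact h1.trans h2.le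
      · have : a = n + 1 := le_antisymm hab h
        subst this; exact le_rfl
  -- the series is dominated by the upper central series
  have hle : ∀ i : ℕ, i ≤ c → Gs i ≤ upperCentralSeries G i := by
    intro i
    induction i with
    | zero => intro _; rw [h0]; exact bot_le
    | succ n ih =>
      intro hnc x hx
      rw [upperCentralSeries, Subgroup.mem_upperCentralSeries_succ_iff]
      intro y
      have hx' : x⁻¹ ∈ Gs (n + 1) := inv_mem hx
      have := hcentral (n + 1) (Nat.succ_le_succ (Nat.zero_le n)) hnc x⁻¹ hx' y⁻¹
      simp only [Nat.add_sub_cancel, inv_inv] at this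
      exact ih (le_trans (Nat.le_succ n) hnc) this
  constructor
  · -- (1) → (2)
    intro h1
    have key : ∀ i : ℕ, i ≤ c → upperCentralSeries G i ≤ Gs i := by
      intro i
      induction i with
      | zero => intro _; simp [h0, upperCentralSeries, Subgroup.upperCentralSeries_zero]
      | succ n ih =>
        intro hnc x hx
        by_contra hxg
        have hex : ∃ m, x ∈ Gs m := ⟨c, by rw [htop]; trivial⟩
        set m := Nat.find hex with hmdef
        have hm : x ∈ Gs m := Nat.find_spec hex
        have hmin : ∀ k, k < m → x ∉ Gs k := fun k hk => Nat.find_min hex hk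
        have hmc : m ≤ c := Nat.find_le (by rw [htop]; trivial)
        have hm2 : n + 2 ≤ m := by
          by_contra hcon
          push_neg at hcon
          have : x ∈ Gs (n + 1) := hmono m (n + 1) (by omega) hnc hm
          exact hxg this
        obtain ⟨y, hz1, hz2⟩ := h1 m (by omega) hmc x hm (hmin (m - 1) (by omega))
        -- x ∈ Z_{n+1}, so [x,y] ∈ Z_n
        have hxz : ∀ g : G, x * g * x⁻¹ * g⁻¹ ∈ upperCentralSeries G n :=
          (mem_upperCentralSeries_succ_iff).mp hx
        have hN : (upperCentralSeries G n).Normal := by unfold upperCentralSeries; infer_instance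
        have h1' : x * y⁻¹ * x⁻¹ * y ∈ upperCentralSeries G n := by
          simpa using hxz y⁻¹
        have h2' : x⁻¹ * (x * y⁻¹ * x⁻¹ * y) * x⁻¹⁻¹ ∈ upperCentralSeries G n :=
          hN.conj_mem _ h1' x⁻¹
        have h3' : x⁻¹ * y⁻¹ * x * y ∈ upperCentralSeries G n := by
          have h4' := inv_mem h2'
          have : (x⁻¹ * (x * y⁻¹ * x⁻¹ * y) * x⁻¹⁻¹)⁻¹ = x⁻¹ * y⁻¹ * x * y := by group
          rwa [this] at h4'
        have : x⁻¹ * y⁻¹ * x * y ∈ Gs (m - 2) :=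
          hmono n (m - 2) (by omega) (by omega) (ih (by omega) h3')
        exact hz2 this
    intro i _ hic
    exact le_antisymm (hle i hic) (key i hic)
  · -- (2) → (1)
    intro h2 m hm2 hmc x hxm hxm1
    have hZm1 : Gs (m - 1) = upperCentralSeries G (m - 1) := h2 (m - 1) (by omega) (by omega)
    have hGm2 : Gs (m - 2) = upperCentralSeries G (m - 2) := by
      rcases Nat.eq_or_lt_of_le hm2 with h | h
      · have : m - 2 = 0 := by omega
        rw [this, h0, upperCentralSeries, Subgroup.upperCentralSeries_zero]
      · exact h2 (m - 2) (by omega) (by omega)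
    have hx' : x ∉ upperCentralSeries G ((m - 2) + 1) := by
      have heq : (m - 2) + 1 = m - 1 := by omega
      rw [heq, ← hZm1]; exact hxm1
    rw [upperCentralSeries, Subgroup.mem_upperCentralSeries_succ_iff] at hx'
    push_neg at hx'
    obtain ⟨y, hy⟩ := hx'
    refine ⟨y⁻¹, hcentral m (by omega) hmc x hxm y⁻¹, ?_⟩
    intro hmem
    apply hy
    rw [hGm2] at hmem
    have hN : (upperCentralSeries G (m - 2)).Normal := by unfold upperCentralSeries; infer_instance
    have h1' := hN.conj_mem _ (inv_mem hmem) x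
    have : x * (x⁻¹ * y⁻¹⁻¹ * x * y⁻¹)⁻¹ * x⁻¹ = x * y * x⁻¹ * y⁻¹ := by group
    rwa [this] at h1'
end
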